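/- arXiv:1102.2039 — 8 statements merged into one kernel-verified Lean document; each statement's English description precedes it below -/
import Mathlib

section
/- For every q with 1 ≤ q ≤ ℓ and every chamber C ∈ ch^q_F(A), the restriction of h_q to the closure (in ℝ^ℓ) of C ∩ F^q attains its minimum at a unique point p, and there exists exactly one X ∈ L(A) with dim X = ℓ − q and X ∩ F^q = {p}. -/
/-!
A chamber `C` is the open sign cell of any of its points, so `closure (C ∩ F^q) = \bar C ∩ F^q` is
a polyhedron, on which `h_q ≥ 0` by condition (1); by finite-dimensional linear programming
(induction on the dimension and on the number of inequalities) `h_q` attains its minimum there.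
Let `p` be a minimum point and `X_p` the intersection of the hyperplanes through `p`. Near `p`,
moving inside `F^q ∩ X_p` stays in `\bar C`, so `h_q` is constant on `F^q ∩ X_p`. If `F^q ∩ X_p`
had positive dimension, genericity would make `F^{q-1} ∩ X_p` nonempty, whence `h_q ≡ 0` on
`F^q ∩ X_p`, i.e. `F^q ∩ X_p ⊆ F^{q-1} ∩ X_p`, which genericity makes one dimension smaller. Hence
`F^q ∩ X_p = {p}` and `dim X_p = ℓ - q`. Condition (2) forces flats of dimension `ℓ - q` with
equal `h_q`-values on `F^q` to coincide, which gives both uniqueness statements.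
-/

open Set

namespace IY

/-- An affine hyperplane arrangement in `ℝ^ℓ`, given by `n` affine-linear forms
with nonzero linear parts; the `i`-th hyperplane is the zero set of `α i`. -/
structure Arrangement (ℓ n : ℕ) where
  α : Fin n → ((Fin ℓ → ℝ) →ᵃ[ℝ] ℝ)
  nonzero : ∀ i, (α i).linear ≠ 0

namespace Arrangement

variable {ℓ n : ℕ} (A : Arrangement ℓ n)

/-- The hyperplane `H_i = {α_i = 0}`. -/
def H (i : Fin n) : Set (Fin ℓ → ℝ) := {x | A.α i x = 0}

/-- The real complement of the subarrangement indexed by `s`. -/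
def compOn (s : Set (Fin n)) : Set (Fin ℓ → ℝ) := {x | ∀ i ∈ s, A.α i x ≠ 0}

/-- Chambers of the subarrangement indexed by `s` : connected components of its
real complement. -/
def IsChamberOn (s : Set (Fin n)) (C : Set (Fin ℓ → ℝ)) : Prop :=
  ∃ x ∈ A.compOn s, C = connectedComponentIn (A.compOn s) x

/-- Chambers of the full arrangement. -/
def IsChamber (C : Set (Fin ℓ → ℝ)) : Prop := A.IsChamberOn Set.univ C

/-- The intersection poset of the subarrangement indexed by `s` : nonempty
intersections of subfamilies (the empty intersection giving `ℝ^ℓ`). -/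
def LOn (s : Set (Fin n)) (X : Set (Fin ℓ → ℝ)) : Prop :=
  X.Nonempty ∧ ∃ t : Set (Fin n), t ⊆ s ∧ X = ⋂ i ∈ t, A.H i

/-- The intersection poset `L(A)`. -/
def L (X : Set (Fin ℓ → ℝ)) : Prop := A.LOn Set.univ X

/-- The real part of a point of `ℂ^ℓ`. -/
def reP {ℓ : ℕ} (z : Fin ℓ → ℂ) : Fin ℓ → ℝ := fun j => (z j).re

/-- The imaginary part of a point of `ℂ^ℓ`. -/
def imP {ℓ : ℕ} (z : Fin ℓ → ℂ) : Fin ℓ → ℝ := fun j => (z j).im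

/-- The point `x + iv` of `ℂ^ℓ`. -/
def mkC {ℓ : ℕ} (x v : Fin ℓ → ℝ) : Fin ℓ → ℂ := fun j => ⟨x j, v j⟩

/-- The complexified complement `M(A) = ℂ^ℓ \ ⋃ H_ℂ`; a point `x + iv` lies on
`H_ℂ = {α_ℂ = 0}` iff `α(x) = 0` and the linear part of `α` kills `v`. -/
def M : Set (Fin ℓ → ℂ) :=
  {z | ∀ i : Fin n, ¬(A.α i (reP z) = 0 ∧ (A.α i).linear (imP z) = 0)}

end Arrangement

/-- Dimension of a subset of `ℝ^ℓ` (for affine subspaces, their dimension). -/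
noncomputable def dimS {ℓ : ℕ} (X : Set (Fin ℓ → ℝ)) : ℕ :=
  Module.finrank ℝ (affineSpan ℝ X).direction

/-- The direction `τ(X)` of (the affine span of) a subset of `ℝ^ℓ`. -/
noncomputable def tau {ℓ : ℕ} (X : Set (Fin ℓ → ℝ)) : Submodule ℝ (Fin ℓ → ℝ) :=
  (affineSpan ℝ X).direction

/-- A flag in `ℝ^ℓ` given by defining affine-linear forms `h_1, …, h_ℓ`
(0-indexed: `h j` is the form `h_{j+1}`). -/
structure Flag (ℓ : ℕ) where
  h : Fin ℓ → ((Fin ℓ → ℝ) →ᵃ[ℝ] ℝ)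

namespace Flag

variable {ℓ : ℕ} (𝓕 : Flag ℓ)

/-- The flag subspace `F^q = {h_{q+1} = ⋯ = h_ℓ = 0}`. -/
def F (q : ℕ) : Set (Fin ℓ → ℝ) := {x | ∀ j : Fin ℓ, q ≤ (j : ℕ) → 𝓕.h j x = 0}

/-- `𝓕.hq q` is the form `h_q` in 1-indexed notation (junk value `0` out of range). -/
noncomputable def hq (q : ℕ) : (Fin ℓ → ℝ) →ᵃ[ℝ] ℝ :=
  if hlt : q - 1 < ℓ then 𝓕.h ⟨q - 1, hlt⟩ else 0

end Flag

/-- Genericity of the flag: for every `X ∈ L(A)`, `F^q ∩ X` is an affine subspace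
of dimension `q + dim X - ℓ`, empty when `q + dim X < ℓ`. -/
def GenericFlag {ℓ n : ℕ} (A : Arrangement ℓ n) (𝓕 : Flag ℓ) : Prop :=
  ∀ X, A.L X → ∀ q, q ≤ ℓ →
    (ℓ ≤ q + dimS X →
      ∃ W : AffineSubspace ℝ (Fin ℓ → ℝ), (W : Set (Fin ℓ → ℝ)).Nonempty ∧
        (W : Set (Fin ℓ → ℝ)) = 𝓕.F q ∩ X ∧
        Module.finrank ℝ W.direction = q + dimS X - ℓ) ∧
    (q + dimS X < ℓ → 𝓕.F q ∩ X = ∅)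

/-- Condition (1) of the Assumption, for the subarrangement indexed by `s`:
if a chamber `C` meets `F^q` but not `F^{q-1}`, then `h_q > 0` on `C ∩ F^q`. -/
def Cond1On {ℓ n : ℕ} (A : Arrangement ℓ n) (s : Set (Fin n)) (𝓕 : Flag ℓ) : Prop :=
  ∀ q : ℕ, 1 ≤ q → q ≤ ℓ → ∀ C, A.IsChamberOn s C →
    (C ∩ 𝓕.F q).Nonempty → C ∩ 𝓕.F (q - 1) = ∅ →
    ∀ x ∈ C ∩ 𝓕.F q, 0 < 𝓕.hq q x

/-- Condition (2) of the Assumption, for the subarrangement indexed by `s`: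
distinct `X, X'` in the intersection poset of dimension `ℓ - q` have different
`h_q`-values at their intersection points with `F^q`. -/
def Cond2On {ℓ n : ℕ} (A : Arrangement ℓ n) (s : Set (Fin n)) (𝓕 : Flag ℓ) : Prop :=
  ∀ q : ℕ, 1 ≤ q → q ≤ ℓ → ∀ X X', A.LOn s X → A.LOn s X' →
    dimS X = ℓ - q → dimS X' = ℓ - q → X ≠ X' →
    ∀ p ∈ X ∩ 𝓕.F q, ∀ p' ∈ X' ∩ 𝓕.F q, 𝓕.hq q p ≠ 𝓕.hq q p'

/-- `C ∈ ch^q_F(A)` : `C` is a chamber meeting `F^q` but not `F^{q-1}`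
(the latter condition being empty for `q = 0`, since `F^{-1} = ∅`). -/
def ChF {ℓ n : ℕ} (A : Arrangement ℓ n) (𝓕 : Flag ℓ) (q : ℕ)
    (C : Set (Fin ℓ → ℝ)) : Prop :=
  A.IsChamber C ∧ (C ∩ 𝓕.F q).Nonempty ∧ (q = 0 ∨ C ∩ 𝓕.F (q - 1) = ∅)

/-- `X = X_C` for `C ∈ ch^q_F(A)` : `X ∈ L(A)` has dimension `ℓ - q` and meets
`F^q` exactly in the unique minimum point of `h_q` on the closure of `C ∩ F^q`. -/
def IsXC {ℓ n : ℕ} (A : Arrangement ℓ n) (𝓕 : Flag ℓ) (q : ℕ)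
    (C X : Set (Fin ℓ → ℝ)) : Prop :=
  A.L X ∧ dimS X = ℓ - q ∧
  ∃ p : Fin ℓ → ℝ, X ∩ 𝓕.F q = {p} ∧ p ∈ closure (C ∩ 𝓕.F q) ∧
    ∀ y ∈ closure (C ∩ 𝓕.F q), 𝓕.hq q p ≤ 𝓕.hq q y

/-- Indices of the hyperplanes parallel to `X`, i.e. `A_{[X]} = {H : τ(X) ⊆ τ(H)}`. -/
def parIdx {ℓ n : ℕ} (A : Arrangement ℓ n) (X : Set (Fin ℓ → ℝ)) : Set (Fin n) :=
  {i | tau X ≤ LinearMap.ker (A.α i).linear}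

/-- `H_i ∈ Sep(C, C')` : the hyperplane `H_i` separates the chambers `C` and `C'`. -/
def SepCh {ℓ n : ℕ} (A : Arrangement ℓ n) (C C' : Set (Fin ℓ → ℝ)) (i : Fin n) : Prop :=
  ((∀ x ∈ C, 0 < A.α i x) ∧ (∀ y ∈ C', A.α i y < 0)) ∨
  ((∀ x ∈ C, A.α i x < 0) ∧ (∀ y ∈ C', 0 < A.α i y))

/-- `H_i ∈ Sep(p₁, p₂)` : the hyperplane `H_i` meets the segment `[p₁, p₂]`. -/
def SepPt {ℓ n : ℕ} (A : Arrangement ℓ n) (p₁ p₂ : Fin ℓ → ℝ) (i : Fin n) : Prop :=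
  ∃ w ∈ segment ℝ p₁ p₂, A.α i w = 0

/-- The piece `S(C)` attached to a chamber with `τ(X_C) = T` and base point `p`:
all `x + iv` with `v ∈ T` and `v ∉ τ(H)` for every `H ∈ Sep(p, x)`. -/
def S {ℓ n : ℕ} (A : Arrangement ℓ n) (T : Submodule ℝ (Fin ℓ → ℝ))
    (p : Fin ℓ → ℝ) : Set (Fin ℓ → ℂ) :=
  {z | Arrangement.imP z ∈ T ∧
    ∀ i : Fin n, SepPt A p (Arrangement.reP z) i →
      (A.α i).linear (Arrangement.imP z) ≠ 0}

end IY

namespace IY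

open Module Filter Topology Arrangement

section Polyhedron

variable {V P : Type*} [AddCommGroup V] [Module ℝ V] [AddTorsor V P]

def polyhedron (S : Set (P →ᵃ[ℝ] ℝ)) : Set P := {x | ∀ g ∈ S, 0 ≤ g x}

@[simp]
lemma polyhedron_empty : polyhedron (∅ : Set (P →ᵃ[ℝ] ℝ)) = univ := by
  simp [polyhedron]

lemma polyhedron_insert (g : P →ᵃ[ℝ] ℝ) (S : Set (P →ᵃ[ℝ] ℝ)) :
    polyhedron (insert g S) = {x | 0 ≤ g x} ∩ polyhedron S := by
  ext; simp [polyhedron]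

lemma polyhedron_union (S T : Set (P →ᵃ[ℝ] ℝ)) :
    polyhedron (S ∪ T) = polyhedron S ∩ polyhedron T := by
  ext; simp [polyhedron, or_imp, forall_and]

lemma mem_polyhedron_image_comp {V' P' : Type*} [AddCommGroup V'] [Module ℝ V']
    [AddTorsor V' P'] (e : P' →ᵃ[ℝ] P) (S : Set (P →ᵃ[ℝ] ℝ)) (x : P') :
    x ∈ polyhedron ((fun g => g.comp e) '' S) ↔ e x ∈ polyhedron S := by
  simp [polyhedron]

lemma _root_.AffineMap.linear_eq_zero_of_bddBelow {f : P →ᵃ[ℝ] ℝ} (hf : BddBelow (range f)) :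
    f.linear = 0 := by
  obtain ⟨B, hB⟩ := hf
  by_contra hne
  obtain ⟨v, hv⟩ : ∃ v, f.linear v ≠ 0 := by
    by_contra! h
    exact hne (LinearMap.ext h)
  obtain ⟨x⟩ : Nonempty P := inferInstance
  have := hB ⟨((B - 1 - f x) / f.linear v) • v +ᵥ x, rfl⟩
  rw [AffineMap.map_vadd, map_smul, smul_eq_mul, div_mul_cancel₀ _ hv, vadd_eq_add] at this
  linarith

lemma _root_.AffineMap.mem_mk'_ker_iff {g : P →ᵃ[ℝ] ℝ} {w₀ : P} (hg : g w₀ = 0) (x : P) :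
    x ∈ AffineSubspace.mk' w₀ (LinearMap.ker g.linear) ↔ g x = 0 := by
  rw [AffineSubspace.mem_mk', LinearMap.mem_ker, g.linearMap_vsub, hg, vsub_eq_sub, sub_zero]

lemma exists_mem_polyhedron_apply_eq_zero {S : Set (P →ᵃ[ℝ] ℝ)} {f g : P →ᵃ[ℝ] ℝ} {y z : P}
    (hy : y ∈ polyhedron S) (hz : z ∈ polyhedron S) (hgy : 0 ≤ g y) (hgz : g z < 0)
    (hf : f z ≤ f y) : ∃ w ∈ polyhedron S, g w = 0 ∧ f w ≤ f y := by
  set t := g y / (g y - g z)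
  have hden : 0 < g y - g z := by linarith
  have ht : t * (g y - g z) = g y := div_mul_cancel₀ _ hden.ne'
  have ht0 : 0 ≤ t := div_nonneg hgy hden.le
  have ht1 : t ≤ 1 := (div_le_one hden).2 (by linarith)
  have hline : ∀ h : P →ᵃ[ℝ] ℝ, h (AffineMap.lineMap y z t) = (1 - t) * h y + t * h z :=
    fun h => by rw [AffineMap.apply_lineMap, AffineMap.lineMap_apply_ring]
  refine ⟨AffineMap.lineMap y z t, fun h hh => ?_, ?_, ?_⟩
  · have := hy h hh
    have := hz h hh
    have : 0 ≤ 1 - t := by linarith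
    rw [hline]
    positivity
  · rw [hline]
    linear_combination -ht
  · rw [hline]
    nlinarith

lemma exists_lt_zero_le_of_not_exists_isMinOn {S : Set (P →ᵃ[ℝ] ℝ)} {f g : P →ᵃ[ℝ] ℝ}
    (hS : (polyhedron S).Nonempty → BddBelow (f '' polyhedron S) →
      ∃ x ∈ polyhedron S, IsMinOn f (polyhedron S) x)
    (hbdd : BddBelow (f '' ({x | 0 ≤ g x} ∩ polyhedron S)))
    (hnomin : ¬∃ x ∈ {x | 0 ≤ g x} ∩ polyhedron S, IsMinOn f ({x | 0 ≤ g x} ∩ polyhedron S) x) :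
    ∀ y ∈ {x | 0 ≤ g x} ∩ polyhedron S, ∃ z ∈ polyhedron S, g z < 0 ∧ f z ≤ f y := by
  intro y hy
  by_cases hbddS : BddBelow (f '' polyhedron S)
  · obtain ⟨x, hxS, hx⟩ := hS ⟨y, hy.2⟩ hbddS
    exact ⟨x, hxS, not_le.1 fun hgx => hnomin ⟨x, ⟨hgx, hxS⟩, fun z hz => hx hz.2⟩, hx hy.2⟩
  · obtain ⟨B, hB⟩ := hbdd
    obtain ⟨_, ⟨z, hzS, rfl⟩, hzB⟩ := not_bddBelow_iff.1 hbddS B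
    exact ⟨z, hzS, not_le.1 fun hgz => (hB ⟨z, ⟨hgz, hzS⟩, rfl⟩).not_gt hzB,
      (hzB.trans_le (hB (mem_image_of_mem f hy))).le⟩

theorem exists_isMinOn_polyhedron [FiniteDimensional ℝ V] {S : Set (P →ᵃ[ℝ] ℝ)}
    (hS : S.Finite) {f : P →ᵃ[ℝ] ℝ} (hne : (polyhedron S).Nonempty)
    (hbdd : BddBelow (f '' polyhedron S)) :
    ∃ x ∈ polyhedron S, IsMinOn f (polyhedron S) x := by
  induction hd : finrank ℝ V using Nat.strong_induction_on generalizing V P S with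
  | _ d ih =>
  induction S, hS using Set.Finite.induction_on with
  | empty =>
    simp only [polyhedron_empty, image_univ] at hne hbdd ⊢
    obtain ⟨x, -⟩ := hne
    refine ⟨x, mem_univ x, fun y _ => ?_⟩
    have := f.linearMap_vsub y x
    rw [AffineMap.linear_eq_zero_of_bddBelow hbdd, LinearMap.zero_apply, vsub_eq_sub] at this
    exact (sub_eq_zero.1 this.symm).ge
  | @insert g S _ hS ihS =>
    rw [polyhedron_insert] at hne hbdd ⊢
    set K := {x | 0 ≤ g x} ∩ polyhedron S
    by_contra hnomin
    have hdescent := exists_lt_zero_le_of_not_exists_isMinOn ihS hbdd hnomin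
    -- With `exists_mem_polyhedron_apply_eq_zero`, every point of `K` is beaten by a point of
    -- `K` on the hyperplane `g = 0`, where the induction hypothesis on the dimension applies.
    obtain ⟨y, hgy : 0 ≤ g y, hyS⟩ := hne
    obtain ⟨z, hzS, hgz, hfz⟩ := hdescent y ⟨hgy, hyS⟩
    obtain ⟨w₀, hw₀S, hgw₀, -⟩ := exists_mem_polyhedron_apply_eq_zero hyS hzS hgy hgz hfz
    have hg : g.linear ≠ 0 := fun h0 => by
      have := g.linearMap_vsub y z
      rw [h0, LinearMap.zero_apply, vsub_eq_sub] at this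
      linarith
    set E := AffineSubspace.mk' w₀ (LinearMap.ker g.linear)
    have : Nonempty E := ⟨⟨w₀, AffineSubspace.self_mem_mk' _ _⟩⟩
    have hdim : finrank ℝ E.direction < d := by
      rw [AffineSubspace.direction_mk', ← hd]
      exact Submodule.finrank_lt (mt LinearMap.ker_eq_top.1 hg)
    have hmemE : ∀ w : E, w ∈ polyhedron ((fun h => h.comp E.subtype) '' S) ↔ (w : P) ∈ K :=
      fun w => by
        rw [mem_polyhedron_image_comp]
        exact ⟨fun hw => ⟨((g.mem_mk'_ker_iff hgw₀ w).1 w.2).ge, hw⟩, And.right⟩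
    have hbddE : BddBelow (f.comp E.subtype '' polyhedron ((fun h => h.comp E.subtype) '' S)) :=
      hbdd.mono <| by rintro _ ⟨w, hw, rfl⟩; exact ⟨w, (hmemE w).1 hw, rfl⟩
    obtain ⟨w, hwS, hwmin⟩ := ih _ hdim (hS.image fun h => h.comp E.subtype)
      ⟨⟨w₀, AffineSubspace.self_mem_mk' _ _⟩, (mem_polyhedron_image_comp _ _ _).2 hw₀S⟩ hbddE rfl
    refine hnomin ⟨w, (hmemE w).1 hwS, fun y hy => ?_⟩
    obtain ⟨z, hzS, hgz, hfz⟩ := hdescent y hy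
    obtain ⟨v, hvS, hgv, hfv⟩ := exists_mem_polyhedron_apply_eq_zero hy.2 hzS hy.1 hgz hfz
    exact (hwmin (a := ⟨v, (g.mem_mk'_ker_iff hgw₀ v).2 hgv⟩)
      ((mem_polyhedron_image_comp _ _ _).2 hvS)).trans hfv

end Polyhedron

section NormedSpace

variable {E : Type*} [NormedAddCommGroup E] [NormedSpace ℝ E]

lemma isClosed_polyhedron [FiniteDimensional ℝ E] (S : Set (E →ᵃ[ℝ] ℝ)) :
    IsClosed (polyhedron S) := by
  simp only [polyhedron, ofPred_forall]
  exact isClosed_biInter fun g _ => isClosed_le continuous_const g.continuous_of_finiteDimensional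

lemma convex_polyhedron (S : Set (E →ᵃ[ℝ] ℝ)) : Convex ℝ (polyhedron S) := by
  simp only [polyhedron, ofPred_forall]
  exact convex_iInter₂ fun g _ => (convex_Ici 0).affine_preimage g

lemma _root_.AffineMap.linear_eq_zero_of_isLocalMinOn {f : E →ᵃ[ℝ] ℝ}
    {W : AffineSubspace ℝ E} {p : E} (hp : p ∈ W) (hmin : IsLocalMinOn f W p) {u : E}
    (hu : u ∈ W.direction) :
    f.linear u = 0 := by
  have hline : ∀ s : ℝ, f (p + s • u) = f p + s * f.linear u := fun s => by
    rw [add_comm, ← vadd_eq_add, AffineMap.map_vadd, map_smul, smul_eq_mul, vadd_eq_add, add_comm]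
  have htendsto : Tendsto (fun s : ℝ => p + s • u) (𝓝 0) (𝓝[W] p) := by
    refine tendsto_nhdsWithin_iff.2 ⟨?_, Eventually.of_forall fun s => ?_⟩
    · exact (continuous_const.add (continuous_id.smul continuous_const)).tendsto' 0 p (by simp)
    · simpa [add_comm p] using AffineSubspace.vadd_mem_of_mem_direction
        (W.direction.smul_mem s hu) hp
  have hlocal : IsLocalMin (fun s : ℝ => f (p + s • u)) 0 := by
    simpa [IsLocalMin, IsMinFilter] using htendsto.eventually hmin
  refine hlocal.hasDerivAt_eq_zero ?_
  simp_rw [hline]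
  simpa using ((hasDerivAt_id (0 : ℝ)).mul_const (f.linear u)).const_add (f p)

end NormedSpace

namespace Arrangement

variable {ℓ n : ℕ} (A : Arrangement ℓ n)

def cell (a : Fin ℓ → ℝ) : Set (Fin ℓ → ℝ) := {x | ∀ i, 0 < A.α i a * A.α i x}

def closedCell (a : Fin ℓ → ℝ) : Set (Fin ℓ → ℝ) := polyhedron (range fun i => A.α i a • A.α i)

/-- `X_p`, the smallest element of `L(A)` containing `p`. -/
def flat (p : Fin ℓ → ℝ) : Set (Fin ℓ → ℝ) := ⋂ i ∈ {i | A.α i p = 0}, A.H i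

variable {A}

lemma mem_closedCell {a x : Fin ℓ → ℝ} : x ∈ A.closedCell a ↔ ∀ i, 0 ≤ A.α i a * A.α i x := by
  simp [closedCell, polyhedron]

lemma cell_subset_closedCell (a : Fin ℓ → ℝ) : A.cell a ⊆ A.closedCell a :=
  fun _ hx => mem_closedCell.2 fun i => (hx i).le

lemma cell_subset_compOn (a : Fin ℓ → ℝ) : A.cell a ⊆ A.compOn univ :=
  fun x hx i _ h0 => (hx i).ne' (by rw [h0, mul_zero])

lemma mem_cell_self {a : Fin ℓ → ℝ} (ha : a ∈ A.compOn univ) : a ∈ A.cell a :=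
  fun i => mul_self_pos.2 (ha i (mem_univ i))

lemma convex_cell (a : Fin ℓ → ℝ) : Convex ℝ (A.cell a) := by
  simp only [cell, ofPred_forall]
  exact convex_iInter fun i => (convex_Ioi 0).affine_preimage (A.α i a • A.α i)

lemma connectedComponentIn_compOn_eq_cell {a : Fin ℓ → ℝ} (ha : a ∈ A.compOn univ) :
    connectedComponentIn (A.compOn univ) a = A.cell a := by
  refine Subset.antisymm (fun x hx i => ?_)
    ((convex_cell a).isPreconnected.subset_connectedComponentIn (mem_cell_self ha)
      (cell_subset_compOn a))
  have hxΩ := connectedComponentIn_subset _ _ hx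
  have hpre := isPreconnected_connectedComponentIn (F := A.compOn univ) (x := a)
  have hcont := (A.α i).continuous_of_finiteDimensional.continuousOn
    (s := connectedComponentIn (A.compOn univ) a)
  have hane := ha i (mem_univ i)
  have hxne := hxΩ i (mem_univ i)
  -- A sign change of `α i` inside the component would produce a zero of `α i` there.
  by_contra hneg
  have hsign : A.α i a * A.α i x < 0 := (not_lt.1 hneg).lt_of_ne (mul_ne_zero hane hxne)
  obtain ⟨y, hy, hy0⟩ : (0 : ℝ) ∈ A.α i '' connectedComponentIn (A.compOn univ) a := by
    rcases mul_neg_iff.1 hsign with ⟨ha0, hx0⟩ | ⟨ha0, hx0⟩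
    · exact hpre.intermediate_value hx (mem_connectedComponentIn ha) hcont ⟨hx0.le, ha0.le⟩
    · exact hpre.intermediate_value (mem_connectedComponentIn ha) hx hcont ⟨ha0.le, hx0.le⟩
  exact connectedComponentIn_subset _ _ hy i (mem_univ i) hy0

lemma IsChamber.eq_cell {C : Set (Fin ℓ → ℝ)} (hC : A.IsChamber C) {a : Fin ℓ → ℝ} (ha : a ∈ C) :
    C = A.cell a := by
  obtain ⟨x, hx, rfl⟩ := hC
  rw [connectedComponentIn_eq ha, connectedComponentIn_compOn_eq_cell
    (connectedComponentIn_subset _ _ ha)]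

lemma openSegment_subset_cell {a b : Fin ℓ → ℝ} (ha : a ∈ A.cell a) (hb : b ∈ A.closedCell a) :
    openSegment ℝ b a ⊆ A.cell a := by
  rintro _ ⟨s, t, hs, ht, hst, rfl⟩ i
  rw [Convex.combo_affine_apply hst]
  simp only [smul_eq_mul]
  nlinarith [mul_nonneg hs.le (mem_closedCell.1 hb i), mul_pos ht (ha i)]

lemma closure_cell_inter {a : Fin ℓ → ℝ} {F : Set (Fin ℓ → ℝ)} (hFc : Convex ℝ F)
    (hF : IsClosed F) (ha : a ∈ A.cell a ∩ F) :
    closure (A.cell a ∩ F) = A.closedCell a ∩ F := by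
  refine Subset.antisymm (closure_minimal (inter_subset_inter_left F (cell_subset_closedCell a))
    ((isClosed_polyhedron _).inter hF)) fun b hb => ?_
  refine closure_mono ?_ (segment_subset_closure_openSegment (left_mem_segment ℝ b a))
  exact subset_inter (openSegment_subset_cell ha.1 hb.1) (hFc.openSegment_subset hb.2 ha.2)

lemma mem_flat_self (p : Fin ℓ → ℝ) : p ∈ A.flat p := mem_iInter₂.2 fun _ hi => hi

lemma L_flat (p : Fin ℓ → ℝ) : A.L (A.flat p) :=
  ⟨⟨p, mem_flat_self p⟩, _, subset_univ _, rfl⟩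

lemma apply_eq_zero_of_mem_flat {p x : Fin ℓ → ℝ} (hx : x ∈ A.flat p) {i : Fin n}
    (hi : A.α i p = 0) : A.α i x = 0 :=
  mem_iInter₂.1 hx i hi

lemma eventually_mem_closedCell {a p : Fin ℓ → ℝ} (hp : p ∈ A.closedCell a) :
    ∀ᶠ x in 𝓝 p, x ∈ A.flat p → x ∈ A.closedCell a := by
  have hwall : ∀ i, ∀ᶠ x in 𝓝 p, x ∈ A.flat p → 0 ≤ A.α i a * A.α i x := fun i => by
    rcases (mem_closedCell.1 hp i).eq_or_lt with h0 | hpos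
    · refine Eventually.of_forall fun x hx => ?_
      rcases mul_eq_zero.1 h0.symm with ha0 | hp0
      · rw [ha0, zero_mul]
      · rw [apply_eq_zero_of_mem_flat hx hp0, mul_zero]
    · have hcont : Continuous fun x => A.α i a * A.α i x :=
        continuous_const.mul (A.α i).continuous_of_finiteDimensional
      exact (hcont.continuousAt.eventually (lt_mem_nhds hpos)).mono fun x hx _ => hx.le
  filter_upwards [eventually_all.2 hwall] with x hx hxp
  exact mem_closedCell.2 fun i => hx i hxp

end Arrangement

namespace Flag

variable {ℓ : ℕ} (𝓕 : Flag ℓ)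

def forms (q : ℕ) : Set ((Fin ℓ → ℝ) →ᵃ[ℝ] ℝ) :=
  range (fun j : {j : Fin ℓ // q ≤ (j : ℕ)} => 𝓕.h j) ∪
    range (fun j : {j : Fin ℓ // q ≤ (j : ℕ)} => -𝓕.h j)

lemma finite_forms (q : ℕ) : (𝓕.forms q).Finite := (finite_range _).union (finite_range _)

lemma F_eq_polyhedron (q : ℕ) : 𝓕.F q = polyhedron (𝓕.forms q) := by
  ext x
  refine ⟨fun hx g hg => ?_, fun hx j hj => le_antisymm ?_ (hx _ (Or.inl ⟨⟨j, hj⟩, rfl⟩))⟩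
  · rcases hg with ⟨j, rfl⟩ | ⟨j, rfl⟩ <;> simp [hx j j.2]
  · simpa using hx _ (Or.inr ⟨⟨j, hj⟩, rfl⟩)

lemma convex_F (q : ℕ) : Convex ℝ (𝓕.F q) := 𝓕.F_eq_polyhedron q ▸ convex_polyhedron _

lemma isClosed_F (q : ℕ) : IsClosed (𝓕.F q) := 𝓕.F_eq_polyhedron q ▸ isClosed_polyhedron _

lemma F_subset_F {r s : ℕ} (h : r ≤ s) : 𝓕.F r ⊆ 𝓕.F s := fun _ hx j hj => hx j (h.trans hj)

lemma hq_eq {q : ℕ} (hq1 : 1 ≤ q) (hq2 : q ≤ ℓ) : 𝓕.hq q = 𝓕.h ⟨q - 1, by omega⟩ :=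
  dif_pos _

lemma mem_F_pred_iff {q : ℕ} (hq1 : 1 ≤ q) (hq2 : q ≤ ℓ) {x : Fin ℓ → ℝ} :
    x ∈ 𝓕.F (q - 1) ↔ x ∈ 𝓕.F q ∧ 𝓕.hq q x = 0 := by
  rw [𝓕.hq_eq hq1 hq2]
  refine ⟨fun hx => ⟨𝓕.F_subset_F (Nat.sub_le q 1) hx, hx _ le_rfl⟩, fun ⟨hx, h0⟩ j hj => ?_⟩
  rcases (show (j : ℕ) = q - 1 ∨ q ≤ j by omega) with hjq | hjq
  · rwa [show j = ⟨q - 1, by omega⟩ from Fin.ext hjq]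
  · exact hx j hjq

end Flag

variable {ℓ n : ℕ} {A : Arrangement ℓ n} {𝓕 : Flag ℓ} {q : ℕ}

lemma GenericFlag.exists_affineSubspace_eq_inter (hgen : GenericFlag A 𝓕) {X : Set (Fin ℓ → ℝ)}
    (hX : A.L X) (hq : q ≤ ℓ) (hne : (𝓕.F q ∩ X).Nonempty) :
    ∃ W : AffineSubspace ℝ (Fin ℓ → ℝ), (W : Set (Fin ℓ → ℝ)) = 𝓕.F q ∩ X ∧
      finrank ℝ W.direction = q + dimS X - ℓ ∧ ℓ ≤ q + dimS X := by
  have hle : ℓ ≤ q + dimS X := not_lt.1 fun h => hne.ne_empty ((hgen X hX q hq).2 h)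
  obtain ⟨W, -, hW, hWdim⟩ := (hgen X hX q hq).1 hle
  exact ⟨W, hW, hWdim, hle⟩

lemma exists_isMinOn_closedCell_inter_F {a : Fin ℓ → ℝ} (hne : (A.closedCell a ∩ 𝓕.F q).Nonempty)
    {f : (Fin ℓ → ℝ) →ᵃ[ℝ] ℝ} (hbdd : BddBelow (f '' (A.closedCell a ∩ 𝓕.F q))) :
    ∃ p ∈ A.closedCell a ∩ 𝓕.F q, IsMinOn f (A.closedCell a ∩ 𝓕.F q) p := by
  rw [closedCell, 𝓕.F_eq_polyhedron, ← polyhedron_union] at hne hbdd ⊢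
  exact exists_isMinOn_polyhedron ((finite_range _).union (𝓕.finite_forms q)) hne hbdd

lemma GenericFlag.add_dimS_le (hgen : GenericFlag A 𝓕) {X : Set (Fin ℓ → ℝ)} (hX : A.L X)
    (hq1 : 1 ≤ q) (hq2 : q ≤ ℓ) {W : AffineSubspace ℝ (Fin ℓ → ℝ)}
    (hW : (W : Set (Fin ℓ → ℝ)) = 𝓕.F q ∩ X) (hWdim : finrank ℝ W.direction = q + dimS X - ℓ)
    (hconst : ∀ u ∈ W.direction, (𝓕.hq q).linear u = 0) : q + dimS X ≤ ℓ := by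
  by_contra! hlt
  obtain ⟨W', ⟨y, hyW'⟩, hW', hW'dim⟩ := (hgen X hX (q - 1) (by omega)).1 (by omega)
  rw [hW', mem_inter_iff, 𝓕.mem_F_pred_iff hq1 hq2] at hyW'
  have hyW : y ∈ W := by rw [← SetLike.mem_coe, hW]; exact ⟨hyW'.1.1, hyW'.2⟩
  have hWW' : W ≤ W' := fun x hx => by
    have hxFX : x ∈ 𝓕.F q ∩ X := hW ▸ hx
    have hx0 := hconst _ (AffineSubspace.vsub_mem_direction hx hyW)
    rw [AffineMap.linearMap_vsub, vsub_eq_sub, hyW'.1.2, sub_zero] at hx0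
    rw [← SetLike.mem_coe, hW', mem_inter_iff, 𝓕.mem_F_pred_iff hq1 hq2]
    exact ⟨⟨hxFX.1, hx0⟩, hxFX.2⟩
  have := Submodule.finrank_mono (AffineSubspace.direction_le hWW')
  omega

theorem flat_inter_F_eq_singleton_of_isMinOn (hgen : GenericFlag A 𝓕) (hq1 : 1 ≤ q)
    (hq2 : q ≤ ℓ) {a p : Fin ℓ → ℝ} (hp : p ∈ A.closedCell a ∩ 𝓕.F q)
    (hmin : IsMinOn (𝓕.hq q) (A.closedCell a ∩ 𝓕.F q) p) :
    dimS (A.flat p) = ℓ - q ∧ A.flat p ∩ 𝓕.F q = {p} := by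
  obtain ⟨W, hW, hWdim, hle⟩ :=
    hgen.exists_affineSubspace_eq_inter (L_flat p) hq2 ⟨p, hp.2, mem_flat_self p⟩
  have hpW : p ∈ W := by rw [← SetLike.mem_coe, hW]; exact ⟨hp.2, mem_flat_self p⟩
  have hlocal : IsLocalMinOn (𝓕.hq q) W p := by
    filter_upwards [nhdsWithin_le_nhds (eventually_mem_closedCell hp.1), self_mem_nhdsWithin]
      with x hx hxW
    rw [hW] at hxW
    exact hmin ⟨hx hxW.2, hxW.1⟩
  have hdim := hgen.add_dimS_le (L_flat p) hq1 hq2 hW hWdim fun u hu =>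
    (𝓕.hq q).linear_eq_zero_of_isLocalMinOn hpW hlocal hu
  have hdir : finrank ℝ W.direction = 0 := by omega
  have hsub : (W : Set (Fin ℓ → ℝ)).Subsingleton :=
    (vectorSpan_eq_bot_iff_subsingleton ℝ).1 (Submodule.finrank_eq_zero.1 hdir)
  refine ⟨by omega, ?_⟩
  rw [inter_comm, ← hW, hsub.eq_singleton_of_mem hpW]

lemma Cond2On.eq_of_inter_F_eq_singleton (h2 : Cond2On A univ 𝓕) (hq1 : 1 ≤ q) (hq2 : q ≤ ℓ)
    {X X' : Set (Fin ℓ → ℝ)} {p p' : Fin ℓ → ℝ}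
    (hX : A.L X ∧ dimS X = ℓ - q ∧ X ∩ 𝓕.F q = {p})
    (hX' : A.L X' ∧ dimS X' = ℓ - q ∧ X' ∩ 𝓕.F q = {p'}) (h : 𝓕.hq q p = 𝓕.hq q p') :
    X = X' := by
  by_contra hne
  exact h2 q hq1 hq2 X X' hX.1 hX'.1 hX.2.1 hX'.2.1 hne p (hX.2.2 ▸ mem_singleton p) p'
    (hX'.2.2 ▸ mem_singleton p') h

theorem minimum_and_XC_unique_general (ℓ n : ℕ) (A : Arrangement ℓ n) (𝓕 : Flag ℓ)
    (hgen : GenericFlag A 𝓕)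
    (h1 : Cond1On A Set.univ 𝓕) (h2 : Cond2On A Set.univ 𝓕)
    (q : ℕ) (hq1 : 1 ≤ q) (hq2 : q ≤ ℓ)
    (C : Set (Fin ℓ → ℝ)) (hC : ChF A 𝓕 q C) :
    (∃! p : Fin ℓ → ℝ, p ∈ closure (C ∩ 𝓕.F q) ∧
        ∀ y ∈ closure (C ∩ 𝓕.F q), 𝓕.hq q p ≤ 𝓕.hq q y) ∧
    ∀ p : Fin ℓ → ℝ,
      (p ∈ closure (C ∩ 𝓕.F q) ∧ ∀ y ∈ closure (C ∩ 𝓕.F q), 𝓕.hq q p ≤ 𝓕.hq q y) →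
      ∃! X : Set (Fin ℓ → ℝ), A.L X ∧ dimS X = ℓ - q ∧ X ∩ 𝓕.F q = {p} := by
  obtain ⟨hCch, ⟨a, haC, haF⟩, hCF⟩ := hC
  have hpos := h1 q hq1 hq2 C hCch ⟨a, haC, haF⟩ (hCF.resolve_left (by omega))
  obtain rfl := hCch.eq_cell haC
  set K := A.closedCell a ∩ 𝓕.F q
  have hK : closure (A.cell a ∩ 𝓕.F q) = K :=
    closure_cell_inter (𝓕.convex_F q) (𝓕.isClosed_F q) ⟨haC, haF⟩
  have hnonneg : K ⊆ {x | 0 ≤ 𝓕.hq q x} := hK ▸ closure_minimal (fun x hx => (hpos x hx).le)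
    (isClosed_le continuous_const (𝓕.hq q).continuous_of_finiteDimensional)
  obtain ⟨p₀, hp₀, hmin₀⟩ := exists_isMinOn_closedCell_inter_F
    ⟨a, cell_subset_closedCell a haC, haF⟩ ⟨0, by rintro _ ⟨x, hx, rfl⟩; exact hnonneg hx⟩
  have hXC : ∀ p ∈ K, IsMinOn (𝓕.hq q) K p →
      A.L (A.flat p) ∧ dimS (A.flat p) = ℓ - q ∧ A.flat p ∩ 𝓕.F q = {p} :=
    fun p hp hmin => ⟨L_flat p, flat_inter_F_eq_singleton_of_isMinOn hgen hq1 hq2 hp hmin⟩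
  simp only [hK, ← isMinOn_iff]
  refine ⟨⟨p₀, ⟨hp₀, hmin₀⟩, fun p ⟨hp, hmin⟩ => ?_⟩,
    fun p ⟨hp, hmin⟩ => ⟨A.flat p, hXC p hp hmin, fun X hX => ?_⟩⟩
  · have hflat := h2.eq_of_inter_F_eq_singleton hq1 hq2 (hXC p hp hmin) (hXC p₀ hp₀ hmin₀)
      (le_antisymm (hmin hp₀) (hmin₀ hp))
    have hsingle := (hXC p hp hmin).2.2
    rwa [hflat, (hXC p₀ hp₀ hmin₀).2.2, singleton_eq_singleton_iff, eq_comm] at hsingle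
  · exact h2.eq_of_inter_F_eq_singleton hq1 hq2 hX (hXC p hp hmin) rfl

/-- For `1 ≤ q ≤ ℓ` and `C ∈ ch^q_F(A)`, the restriction of
`h_q` to the closure of `C ∩ F^q` attains its minimum at a unique point `p`,
and there is exactly one `X ∈ L(A)` with `dim X = ℓ - q` and `X ∩ F^q = {p}`. -/
theorem minimum_and_XC_unique (ℓ n : ℕ) (A : Arrangement ℓ n) (𝓕 : Flag ℓ)
    (hind : LinearIndependent ℝ fun j : Fin ℓ => (𝓕.h j).linear)
    (hgen : GenericFlag A 𝓕)
    (h1 : Cond1On A Set.univ 𝓕) (h2 : Cond2On A Set.univ 𝓕)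
    (q : ℕ) (hq1 : 1 ≤ q) (hq2 : q ≤ ℓ)
    (C : Set (Fin ℓ → ℝ)) (hC : ChF A 𝓕 q C) :
    (∃! p : Fin ℓ → ℝ, p ∈ closure (C ∩ 𝓕.F q) ∧
        ∀ y ∈ closure (C ∩ 𝓕.F q), 𝓕.hq q p ≤ 𝓕.hq q y) ∧
    ∀ p : Fin ℓ → ℝ,
      (p ∈ closure (C ∩ 𝓕.F q) ∧ ∀ y ∈ closure (C ∩ 𝓕.F q), 𝓕.hq q p ≤ 𝓕.hq q y) →
      ∃! X : Set (Fin ℓ → ℝ), A.L X ∧ dimS X = ℓ - q ∧ X ∩ 𝓕.F q = {p} :=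
  minimum_and_XC_unique_general ℓ n A 𝓕 hgen h1 h2 q hq1 hq2 C hC

end IY
end

section
/- If C, C' ∈ ch^q_F(A) and C ⪯ C' (i.e. C' ⊆ tilde(C)), then h_q(X_C ∩ F^q) ≤ h_q(X_{C'} ∩ F^q), where h_q(X ∩ F^q) denotes the value of h_q at the unique point of X ∩ F^q. -/
open Set

/-!
Let `y ∈ C' ∩ F^q` and `p = X_C ∩ F^q`. Every hyperplane through `p` contains `X_C`:
otherwise `X_C ∩ H` would have dimension `< ℓ - q` and still meet `F^q` in `p`,
contradicting genericity. So the hyperplanes not in `A_{[X_C]}` are strictly signed at `p`,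
while those in `A_{[X_C]}` are weakly signed at `p ∈ closure C` and strictly signed at
`y ∈ tilde(C)`. Hence the points of the segment `[p, y]` close enough to `p` lie in
`C ∩ F^q`, where `h_q ≥ h_q(p)`; since `h_q` is affine, `h_q(y) ≥ h_q(p)`. Passing to the
closure of `C' ∩ F^q` gives `h_q(p') ≥ h_q(p)`.
-/

open Filter Topology AffineMap

theorem AffineMap.apply_lineMap_ring {E : Type*} [AddCommGroup E] [Module ℝ E]
    (f : E →ᵃ[ℝ] ℝ) (x y : E) (t : ℝ) : f (lineMap x y t) = (1 - t) * f x + t * f y := by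
  rw [apply_lineMap, lineMap_apply_ring]

theorem AffineMap.mul_pos_of_mem_segment {E : Type*} [AddCommGroup E] [Module ℝ E]
    (f : E →ᵃ[ℝ] ℝ) {a b w : E} (hab : 0 < f a * f b) (hw : w ∈ segment ℝ a b) :
    0 < f a * f w := by
  obtain ⟨s, t, hs, ht, hst, hfw⟩ : f w ∈ segment ℝ (f a) (f b) :=
    image_segment ℝ f a b ▸ mem_image_of_mem f hw
  rw [← hfw]
  have hsq : 0 < f a * f a := by nlinarith [mul_self_nonneg (f b)]
  rw [smul_eq_mul, smul_eq_mul]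
  rcases hs.eq_or_lt with rfl | hs
  · obtain rfl : t = 1 := by linarith
    simpa using hab
  · nlinarith [mul_pos hs hsq, mul_nonneg ht hab.le]

namespace IY

open Arrangement

namespace Arrangement

variable {ℓ n : ℕ} {A : Arrangement ℓ n} {s : Set (Fin n)} {D : Set (Fin ℓ → ℝ)}

theorem IsChamberOn.subset_compOn (hD : A.IsChamberOn s D) : D ⊆ A.compOn s := by
  obtain ⟨x, -, rfl⟩ := hD
  exact connectedComponentIn_subset _ _

theorem IsChamberOn.nonempty (hD : A.IsChamberOn s D) : D.Nonempty := by
  obtain ⟨x, hx, rfl⟩ := hD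
  exact ⟨x, mem_connectedComponentIn hx⟩

theorem IsChamberOn.eq_connectedComponentIn (hD : A.IsChamberOn s D) {a : Fin ℓ → ℝ}
    (ha : a ∈ D) : D = connectedComponentIn (A.compOn s) a := by
  obtain ⟨x, -, rfl⟩ := hD
  exact (connectedComponentIn_eq ha).symm ▸ rfl

theorem IsChamberOn.mul_pos (hD : A.IsChamberOn s D) {i : Fin n} (hi : i ∈ s)
    {a b : Fin ℓ → ℝ} (ha : a ∈ D) (hb : b ∈ D) : 0 < A.α i a * A.α i b := by
  have hne : ∀ w ∈ D, A.α i w ≠ 0 := fun w hw => hD.subset_compOn hw i hi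
  have hconn : IsPreconnected D := by
    obtain ⟨x, -, rfl⟩ := hD
    exact isPreconnected_connectedComponentIn
  have hcont : ContinuousOn (A.α i) D := (A.α i).continuous_of_finiteDimensional.continuousOn
  by_contra hcon
  rcases mul_nonpos_iff.mp (not_lt.mp hcon) with ⟨ha0, hb0⟩ | ⟨ha0, hb0⟩
  · obtain ⟨c, hc, hc0⟩ := hconn.intermediate_value hb ha hcont ⟨hb0, ha0⟩
    exact hne c hc hc0
  · obtain ⟨c, hc, hc0⟩ := hconn.intermediate_value ha hb hcont ⟨ha0, hb0⟩
    exact hne c hc hc0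

theorem IsChamberOn.mul_nonneg_of_mem_closure (hD : A.IsChamberOn s D) {i : Fin n} (hi : i ∈ s)
    {a p : Fin ℓ → ℝ} (ha : a ∈ D) (hp : p ∈ closure D) : 0 ≤ A.α i a * A.α i p := by
  refine closure_minimal (fun w hw => (hD.mul_pos hi ha hw).le) ?_ hp
  exact isClosed_le continuous_const
    (continuous_const.mul (A.α i).continuous_of_finiteDimensional)

theorem IsChamberOn.mem_of_forall_mul_pos (hD : A.IsChamberOn s D) {a z : Fin ℓ → ℝ}
    (ha : a ∈ D) (hz : ∀ i ∈ s, 0 < A.α i a * A.α i z) : z ∈ D := by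
  have hseg : segment ℝ a z ⊆ A.compOn s := fun w hw i hi h0 => by
    simpa [h0] using (A.α i).mul_pos_of_mem_segment (hz i hi) hw
  rw [hD.eq_connectedComponentIn ha]
  exact (convex_segment a z).isPreconnected.subset_connectedComponentIn
    (left_mem_segment ℝ a z) hseg (right_mem_segment ℝ a z)

theorem exists_lineMap_mem_of_mem_closure {C : Set (Fin ℓ → ℝ)} (hC : A.IsChamber C)
    (hD : A.IsChamberOn s D) (hCD : C ⊆ D) {p y : Fin ℓ → ℝ} (hp : p ∈ closure C)
    (hps : ∀ i ∉ s, A.α i p ≠ 0) (hy : y ∈ D) :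
    ∃ ε : ℝ, 0 < ε ∧ lineMap p y ε ∈ C := by
  obtain ⟨a, ha⟩ := hC.nonempty
  have hp_nonneg (i : Fin n) : 0 ≤ A.α i a * A.α i p :=
    hC.mul_nonneg_of_mem_closure (mem_univ i) ha hp
  have hsigned (i : Fin n) : ∀ᶠ ε in 𝓝[>] (0 : ℝ), 0 < A.α i a * A.α i (lineMap p y ε) := by
    simp only [AffineMap.apply_lineMap_ring]
    by_cases hi : i ∈ s
    · have hy_pos := hD.mul_pos hi (hCD ha) hy
      filter_upwards [Ioc_mem_nhdsGT zero_lt_one] with ε hε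
      nlinarith [mul_nonneg (sub_nonneg.mpr hε.2) (hp_nonneg i), mul_pos hε.1 hy_pos]
    · have hp_pos : 0 < A.α i a * A.α i p :=
        (hp_nonneg i).lt_of_ne' (mul_ne_zero (hC.subset_compOn ha i (mem_univ i)) (hps i hi))
      have hcont : Continuous fun ε : ℝ => A.α i a * ((1 - ε) * A.α i p + ε * A.α i y) := by
        fun_prop
      refine (hcont.tendsto' 0 _ (by simp)).eventually_const_lt hp_pos |>.filter_mono ?_
      exact nhdsWithin_le_nhds
  obtain ⟨ε, hall, hε⟩ := ((eventually_all.2 hsigned).and self_mem_nhdsWithin).exists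
  exact ⟨ε, hε, hC.mem_of_forall_mul_pos ha fun i _ => hall i⟩

theorem L.inter_H {X : Set (Fin ℓ → ℝ)} (hX : A.L X) {i : Fin n}
    (hne : (X ∩ A.H i).Nonempty) : A.L (X ∩ A.H i) := by
  obtain ⟨-, t, -, rfl⟩ := hX
  refine ⟨hne, insert i t, subset_univ _, ?_⟩
  rw [biInter_insert, inter_comm]

theorem tau_le_ker_of_subset_H {Y : Set (Fin ℓ → ℝ)} {i : Fin n} (hY : Y ⊆ A.H i) :
    tau Y ≤ LinearMap.ker (A.α i).linear := by
  rw [tau, direction_affineSpan, vectorSpan_def, Submodule.span_le]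
  rintro _ ⟨u, hu, v, hv, rfl⟩
  have hu0 : A.α i u = 0 := hY hu
  have hv0 : A.α i v = 0 := hY hv
  simpa [hu0, hv0] using (A.α i).linearMap_vsub u v

end Arrangement

theorem Flag.lineMap_mem_F {ℓ : ℕ} (𝓕 : Flag ℓ) {q : ℕ} {x y : Fin ℓ → ℝ} (hx : x ∈ 𝓕.F q)
    (hy : y ∈ 𝓕.F q) (t : ℝ) : lineMap x y t ∈ 𝓕.F q := fun j hj => by
  rw [AffineMap.apply_lineMap_ring, hx j hj, hy j hj]
  ring

theorem mem_parIdx_of_apply_eq_zero {ℓ n : ℕ} {A : Arrangement ℓ n} {𝓕 : Flag ℓ}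
    (hgen : GenericFlag A 𝓕) {q : ℕ} (hq : q ≤ ℓ) {X : Set (Fin ℓ → ℝ)} (hX : A.L X)
    (hdim : dimS X = ℓ - q) {p : Fin ℓ → ℝ} (hp : p ∈ X ∩ 𝓕.F q) {i : Fin n}
    (hi : A.α i p = 0) : i ∈ parIdx A X := by
  by_contra hnot
  have hpY : p ∈ X ∩ A.H i := ⟨hp.1, hi⟩
  have hlt : tau (X ∩ A.H i) < tau X := by
    refine lt_of_le_of_ne ?_ fun heq => hnot ?_
    · exact AffineSubspace.direction_le (affineSpan_mono ℝ inter_subset_left)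
    · exact show tau X ≤ _ from heq ▸ tau_le_ker_of_subset_H inter_subset_right
  have hdimY : q + dimS (X ∩ A.H i) < ℓ := by
    have : dimS (X ∩ A.H i) < dimS X := Submodule.finrank_lt_finrank_of_lt hlt
    omega
  have hempty := (hgen _ (hX.inter_H ⟨p, hpY⟩) q hq).2 hdimY
  exact hempty.subset ⟨hp.2, hpY⟩

theorem order_implies_height_le_general (ℓ n : ℕ) (A : Arrangement ℓ n) (𝓕 : Flag ℓ)
    (hgen : GenericFlag A 𝓕)
    (q : ℕ) (hq2 : q ≤ ℓ)
    (C C' X X' : Set (Fin ℓ → ℝ)) (p p' : Fin ℓ → ℝ)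
    (hC : ChF A 𝓕 q C)
    (hX : IsXC A 𝓕 q C X) (hX' : IsXC A 𝓕 q C' X')
    (hp : X ∩ 𝓕.F q = {p}) (hp' : X' ∩ 𝓕.F q = {p'})
    (Ct : Set (Fin ℓ → ℝ)) (hCt : A.IsChamberOn (parIdx A X) Ct) (hCCt : C ⊆ Ct)
    (hprec : C' ⊆ Ct) :
    𝓕.hq q p ≤ 𝓕.hq q p' := by
  obtain ⟨hLX, hdimX, p₀, hp₀, hpcl, hmin⟩ := hX
  obtain ⟨-, -, p₀', hp₀', hpcl', -⟩ := hX'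
  obtain rfl : p = p₀ := singleton_injective (hp.symm.trans hp₀)
  obtain rfl : p' = p₀' := singleton_injective (hp'.symm.trans hp₀')
  have hpXF : p ∈ X ∩ 𝓕.F q := hp.symm ▸ mem_singleton p
  have hoff : ∀ i ∉ parIdx A X, A.α i p ≠ 0 := fun i hi h0 =>
    hi (mem_parIdx_of_apply_eq_zero hgen hq2 hLX hdimX hpXF h0)
  refine closure_minimal (fun y hy => ?_)
    (isClosed_le continuous_const (𝓕.hq q).continuous_of_finiteDimensional) hpcl'
  obtain ⟨ε, hε, hzC⟩ := exists_lineMap_mem_of_mem_closure hC.1 hCt hCCt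
    (closure_mono inter_subset_left hpcl) hoff (hprec hy.1)
  have hz := hmin _ (subset_closure ⟨hzC, 𝓕.lineMap_mem_F hpXF.2 hy.2 ε⟩)
  rw [AffineMap.apply_lineMap_ring] at hz
  show 𝓕.hq q p ≤ 𝓕.hq q y
  nlinarith

/-- If `C, C' ∈ ch^q_F(A)` and `C ⪯ C'` (i.e. `C' ⊆ tilde(C)`),
then `h_q(X_C ∩ F^q) ≤ h_q(X_{C'} ∩ F^q)`. -/
theorem order_implies_height_le (ℓ n : ℕ) (A : Arrangement ℓ n) (𝓕 : Flag ℓ)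
    (hind : LinearIndependent ℝ fun j : Fin ℓ => (𝓕.h j).linear)
    (hgen : GenericFlag A 𝓕)
    (h1 : Cond1On A Set.univ 𝓕) (h2 : Cond2On A Set.univ 𝓕)
    (q : ℕ) (hq2 : q ≤ ℓ)
    (C C' X X' : Set (Fin ℓ → ℝ)) (p p' : Fin ℓ → ℝ)
    (hC : ChF A 𝓕 q C) (hC' : ChF A 𝓕 q C')
    (hX : IsXC A 𝓕 q C X) (hX' : IsXC A 𝓕 q C' X')
    (hp : X ∩ 𝓕.F q = {p}) (hp' : X' ∩ 𝓕.F q = {p'})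
    (Ct : Set (Fin ℓ → ℝ)) (hCt : A.IsChamberOn (parIdx A X) Ct) (hCCt : C ⊆ Ct)
    (hprec : C' ⊆ Ct) :
    𝓕.hq q p ≤ 𝓕.hq q p' :=
  order_implies_height_le_general ℓ n A 𝓕 hgen q hq2 C C' X X' p p' hC hX hX' hp hp' Ct hCt hCCt
    hprec
end IY
end

section
/- If C, C' ∈ ch^q_F(A) satisfy X_C = X_{C'}, then Sep(C, C') ⊆ A_{X_C}, i.e. every hyperplane of A separating C from C' contains X_C. -/
open Set

namespace IY
open Arrangement

noncomputable def hypSub {ℓ : ℕ} (α : (Fin ℓ → ℝ) →ᵃ[ℝ] ℝ) : AffineSubspace ℝ (Fin ℓ → ℝ) :=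
  AffineSubspace.comap α (AffineSubspace.mk' (0:ℝ) ⊥)

lemma coe_hypSub {ℓ : ℕ} (α : (Fin ℓ → ℝ) →ᵃ[ℝ] ℝ) :
    ((hypSub α : AffineSubspace ℝ (Fin ℓ → ℝ)) : Set (Fin ℓ → ℝ)) = {x | α x = 0} := by
  ext x
  simp [hypSub, AffineSubspace.coe_comap, AffineSubspace.mem_mk', sub_eq_zero]

lemma coe_sInf' {ℓ : ℕ} (S : Set (AffineSubspace ℝ (Fin ℓ → ℝ))) :
    ((sInf S : AffineSubspace ℝ (Fin ℓ → ℝ)) : Set (Fin ℓ → ℝ)) =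
      ⋂ W ∈ S, (W : Set (Fin ℓ → ℝ)) := rfl

lemma exists_affineSubspace_of_L {ℓ n : ℕ} (A : Arrangement ℓ n) {X : Set (Fin ℓ → ℝ)}
    (hX : A.L X) : ∃ W : AffineSubspace ℝ (Fin ℓ → ℝ), (W : Set (Fin ℓ → ℝ)) = X := by
  obtain ⟨-, t, -, ht⟩ := hX
  refine ⟨sInf ((fun i => hypSub (A.α i)) '' t), ?_⟩
  rw [coe_sInf', Set.biInter_image, ht]
  exact Set.iInter₂_congr fun i _ => coe_hypSub (A.α i)

/-- If `C, C' ∈ ch^q_F(A)` have `X_C = X_{C'} = X`, then every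
hyperplane separating `C` from `C'` contains `X`. -/
theorem sep_subset_AX (ℓ n : ℕ) (A : Arrangement ℓ n) (𝓕 : Flag ℓ)
    (hind : LinearIndependent ℝ fun j : Fin ℓ => (𝓕.h j).linear)
    (hgen : GenericFlag A 𝓕)
    (h1 : Cond1On A Set.univ 𝓕) (h2 : Cond2On A Set.univ 𝓕)
    (q : ℕ) (hq2 : q ≤ ℓ)
    (C C' X : Set (Fin ℓ → ℝ))
    (hC : ChF A 𝓕 q C) (hC' : ChF A 𝓕 q C')
    (hX : IsXC A 𝓕 q C X) (hX' : IsXC A 𝓕 q C' X) :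
    ∀ i : Fin n, SepCh A C C' i → X ⊆ A.H i := by
  obtain ⟨hLX, hdim, p, hXF, hpC, -⟩ := hX
  obtain ⟨-, -, p', hXF', hpC', -⟩ := hX'
  have hpp : p' = p := by
    have h1 : p' ∈ X ∩ 𝓕.F q := by rw [hXF']; exact rfl
    rw [hXF] at h1; exact h1
  rw [hpp] at hpC'
  intro i hsep x hxX
  by_contra hx
  -- p ∈ X ∩ F^q
  have hpXF : p ∈ X ∩ 𝓕.F q := by rw [hXF]; exact rfl
  -- α i p = 0
  have hcont : Continuous (A.α i) := AffineMap.continuous_of_finiteDimensional _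
  have hp1 : p ∈ closure C := closure_mono Set.inter_subset_left hpC
  have hp2 : p ∈ closure C' := closure_mono Set.inter_subset_left hpC'
  have h0 : A.α i p = 0 := by
    rcases hsep with ⟨ha, hb⟩ | ⟨ha, hb⟩
    · have a1 : 0 ≤ A.α i p :=
        closure_minimal (fun y hy => (ha y hy).le)
          (isClosed_le continuous_const hcont) hp1
      have a2 : A.α i p ≤ 0 :=
        closure_minimal (fun y hy => (hb y hy).le)
          (isClosed_le hcont continuous_const) hp2
      linarith
    · have a1 : A.α i p ≤ 0 :=
        closure_minimal (fun y hy => (ha y hy).le)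
          (isClosed_le hcont continuous_const) hp1
      have a2 : 0 ≤ A.α i p :=
        closure_minimal (fun y hy => (hb y hy).le)
          (isClosed_le continuous_const hcont) hp2
      linarith
  -- the affine subspace realizing X
  obtain ⟨W, hWcoe⟩ := exists_affineSubspace_of_L A hLX
  set W' : AffineSubspace ℝ (Fin ℓ → ℝ) := W ⊓ hypSub (A.α i) with hW'def
  have hW'coe : (W' : Set (Fin ℓ → ℝ)) = X ∩ A.H i := by
    rw [hW'def]
    show (W : Set (Fin ℓ → ℝ)) ∩ (hypSub (A.α i) : Set (Fin ℓ → ℝ)) = X ∩ A.H i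
    rw [hWcoe, coe_hypSub]
    rfl
  have hpW' : p ∈ (W' : Set (Fin ℓ → ℝ)) := by
    rw [hW'coe]; exact ⟨hpXF.1, h0⟩
  have hlt : W' < W := by
    refine lt_of_le_of_ne inf_le_left (fun h => hx ?_)
    have hxW : x ∈ (W : Set (Fin ℓ → ℝ)) := by rw [hWcoe]; exact hxX
    have : x ∈ (W' : Set (Fin ℓ → ℝ)) := by rw [h]; exact hxW
    rw [hW'coe] at this
    exact this.2
  have hdirlt : W'.direction < W.direction :=
    AffineSubspace.direction_lt_of_nonempty hlt ⟨p, hpW'⟩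
  have hrank : Module.finrank ℝ W'.direction < Module.finrank ℝ W.direction :=
    Submodule.finrank_lt_finrank_of_lt hdirlt
  have hdimX : dimS X = Module.finrank ℝ W.direction := by
    rw [dimS, ← hWcoe, AffineSubspace.affineSpan_coe]
  have hdimY : dimS (X ∩ A.H i) = Module.finrank ℝ W'.direction := by
    rw [dimS, ← hW'coe, AffineSubspace.affineSpan_coe]
  -- X ∩ H i ∈ L(A)
  have hLY : A.L (X ∩ A.H i) := by
    obtain ⟨-, t, -, ht⟩ := hLX
    refine ⟨⟨p, ⟨hpXF.1, h0⟩⟩, insert i t, Set.subset_univ _, ?_⟩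
    rw [Set.biInter_insert, ← ht, Set.inter_comm]
  -- genericity contradiction
  have hsmall : q + dimS (X ∩ A.H i) < ℓ := by
    have : dimS (X ∩ A.H i) < dimS X := by rw [hdimX, hdimY]; exact hrank
    omega
  have hempty : 𝓕.F q ∩ (X ∩ A.H i) = ∅ := (hgen _ hLY q hq2).2 hsmall
  exact absurd hempty (Set.Nonempty.ne_empty ⟨p, hpXF.2, hpXF.1, h0⟩)

end IY
end

section
/- Let C ∈ ch^q_F(A) and C' ∈ ch^{q'}_F(A). If C' ⊆ tilde(C), then either q = q' and C ⪯ C', or q < q'. -/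
open Set

namespace IY
open Arrangement

private theorem mul_pos_of_ne_zero_self {a : ℝ} (ha : a ≠ 0) : 0 < a * a :=
  mul_self_pos.mpr ha

/-- A chamber of the subarrangement indexed by `s` is exactly the "sign cell"
of its base point. -/
theorem chamber_eq_cell {ℓ n : ℕ} (A : Arrangement ℓ n) (s : Set (Fin n))
    (x : Fin ℓ → ℝ) (hx : x ∈ A.compOn s) :
    connectedComponentIn (A.compOn s) x
      = {y | ∀ i ∈ s, 0 < A.α i x * A.α i y} := by
  have hcont : ∀ i : Fin n, Continuous fun y : Fin ℓ → ℝ => A.α i y := fun i =>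
    (A.α i).continuous_of_finiteDimensional
  apply Set.Subset.antisymm
  · intro y hy i hi
    have hpc : IsPreconnected (connectedComponentIn (A.compOn s) x) :=
      isPreconnected_connectedComponentIn
    have hsub : connectedComponentIn (A.compOn s) x ⊆ A.compOn s :=
      connectedComponentIn_subset _ _
    have hx' : x ∈ connectedComponentIn (A.compOn s) x := mem_connectedComponentIn hx
    by_contra hle
    push_neg at hle
    have hxi : A.α i x ≠ 0 := hx i hi
    have hyi : A.α i y ≠ 0 := (hsub hy) i hi
    have hlt : A.α i x * A.α i y < 0 :=
      lt_of_le_of_ne hle (mul_ne_zero hxi hyi)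
    have hIVT := hpc.intermediate_value (f := fun y => A.α i y) hx' hy
      ((hcont i).continuousOn)
    have hIVT' := hpc.intermediate_value (f := fun y => A.α i y) hy hx'
      ((hcont i).continuousOn)
    rcases mul_neg_iff.1 hlt with ⟨h1, h2⟩ | ⟨h1, h2⟩
    · have h0 : (0 : ℝ) ∈ Set.Icc (A.α i y) (A.α i x) := ⟨h2.le, h1.le⟩
      obtain ⟨w, hw, hw0⟩ := hIVT' h0
      exact (hsub hw) i hi hw0
    · have h0 : (0 : ℝ) ∈ Set.Icc (A.α i x) (A.α i y) := ⟨h1.le, h2.le⟩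
      obtain ⟨w, hw, hw0⟩ := hIVT h0
      exact (hsub hw) i hi hw0
  · have hconv : Convex ℝ {y : Fin ℓ → ℝ | ∀ i ∈ s, 0 < A.α i x * A.α i y} := by
      intro u hu v hv a b ha hb hab
      intro i hi
      have huv : a • u + b • v = AffineMap.lineMap u v b := by
        rw [AffineMap.lineMap_apply_module]
        have : a = 1 - b := by linarith
        rw [this]
      rw [huv]
      have happ : A.α i (AffineMap.lineMap u v b) =
          AffineMap.lineMap (A.α i u) (A.α i v) b := (A.α i).apply_lineMap u v b
      rw [happ, AffineMap.lineMap_apply_module]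
      have h1 := hu i hi
      have h2 := hv i hi
      rcases eq_or_lt_of_le hb with hb0 | hbpos
      · rw [← hb0]; simpa using h1
      · rcases eq_or_lt_of_le ha with ha0 | hapos
        · have : b = 1 := by linarith
          rw [this]; simpa using h2
        · have hb1 : 1 - b = a := by linarith
          rw [hb1]
          have := add_pos (mul_pos hapos h1) (mul_pos hbpos h2)
          simp only [smul_eq_mul]
          nlinarith [this]
    have hcell_sub : {y : Fin ℓ → ℝ | ∀ i ∈ s, 0 < A.α i x * A.α i y} ⊆ A.compOn s := by
      intro y hy i hi
      intro h0
      have := hy i hi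
      rw [h0, mul_zero] at this
      exact lt_irrefl 0 this
    have hxmem : x ∈ {y : Fin ℓ → ℝ | ∀ i ∈ s, 0 < A.α i x * A.α i y} := by
      intro i hi
      exact mul_pos_of_ne_zero_self (hx i hi)
    exact hconv.isPreconnected.subset_connectedComponentIn hxmem hcell_sub

/-- If `C ∈ ch^q_F(A)`, `C' ∈ ch^{q'}_F(A)` and `C' ⊆ tilde(C)`,
then either `q = q'` and `C ⪯ C'`, or `q < q'`. -/
theorem subset_tilde_cases (ℓ n : ℕ) (A : Arrangement ℓ n) (𝓕 : Flag ℓ)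
    (hind : LinearIndependent ℝ fun j : Fin ℓ => (𝓕.h j).linear)
    (hgen : GenericFlag A 𝓕)
    (h1 : Cond1On A Set.univ 𝓕) (h2 : Cond2On A Set.univ 𝓕)
    (q q' : ℕ) (hq : q ≤ ℓ) (hq' : q' ≤ ℓ)
    (C C' X : Set (Fin ℓ → ℝ))
    (hC : ChF A 𝓕 q C) (hC' : ChF A 𝓕 q' C')
    (hX : IsXC A 𝓕 q C X)
    (Ct : Set (Fin ℓ → ℝ)) (hCt : A.IsChamberOn (parIdx A X) Ct) (hCCt : C ⊆ Ct)
    (hsub : C' ⊆ Ct) :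
    (q = q' ∧ C' ⊆ Ct) ∨ q < q' := by
  rcases Nat.lt_trichotomy q q' with hlt | heq | hgt
  · exact Or.inr hlt
  · exact Or.inl ⟨heq, hsub⟩
  exfalso
  -- Now q' < q, so q ≥ 1.
  have hq1 : 1 ≤ q := by omega
  have hqlt : q - 1 < ℓ := by omega
  -- unpack hypotheses
  obtain ⟨hXL, hXdim, p, hXF, hpcl, hpmin⟩ := hX
  obtain ⟨hCch, hCne, hCF⟩ := hC
  have hCempty : C ∩ 𝓕.F (q - 1) = ∅ := by
    rcases hCF with h | h
    · omega
    · exact h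
  obtain ⟨x₀, hx₀, hCeq⟩ := hCch
  obtain ⟨x₁, hx₁, hCteq⟩ := hCt
  -- the point z ∈ C' ∩ F^{q'} ⊆ Ct ∩ F^{q-1}
  obtain ⟨hC'ch, ⟨z, hzC', hzF'⟩, _⟩ := hC'
  have hzCt : z ∈ Ct := hsub hzC'
  have hzF : z ∈ 𝓕.F (q - 1) := by
    intro j hj
    exact hzF' j (by omega)
  have hzFq : z ∈ 𝓕.F q := by
    intro j hj
    exact hzF' j (by omega)
  -- the form h_q
  have hqdef : 𝓕.hq q = 𝓕.h ⟨q - 1, hqlt⟩ := by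
    rw [Flag.hq, dif_pos hqlt]
  have hqz : 𝓕.hq q z = 0 := by
    rw [hqdef]
    exact hzF ⟨q - 1, hqlt⟩ (le_refl _)
  -- p ∈ X and p ∈ F^q
  have hpXF : p ∈ X ∩ 𝓕.F q := by rw [hXF]; rfl
  have hpX : p ∈ X := hpXF.1
  have hpFq : p ∈ 𝓕.F q := hpXF.2
  -- continuity of the forms
  have hcont : ∀ i : Fin n, Continuous fun y : Fin ℓ → ℝ => A.α i y := fun i =>
    (A.α i).continuous_of_finiteDimensional
  have hqcont : Continuous fun y : Fin ℓ → ℝ => 𝓕.hq q y := by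
    rw [hqdef]
    exact (𝓕.h ⟨q - 1, hqlt⟩).continuous_of_finiteDimensional
  -- h_q > 0 on C ∩ F^q
  have hpos : ∀ x ∈ C ∩ 𝓕.F q, 0 < 𝓕.hq q x :=
    h1 q hq1 hq C ⟨x₀, hx₀, hCeq⟩ hCne hCempty
  -- h_q p ≥ 0
  have hp0 : 0 ≤ 𝓕.hq q p := by
    have hcl : closure (C ∩ 𝓕.F q) ⊆ {y | 0 ≤ 𝓕.hq q y} := by
      apply closure_minimal
      · intro y hy
        exact (hpos y hy).le
      · exact isClosed_le continuous_const hqcont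
    exact hcl hpcl
  -- h_q p ≠ 0, using genericity with F^{q-1} ∩ X = ∅
  have hpne : 𝓕.hq q p ≠ 0 := by
    intro h0
    have hpF1 : p ∈ 𝓕.F (q - 1) := by
      intro j hj
      rcases Nat.lt_or_ge (j : ℕ) q with hjq | hjq
      · have : (j : ℕ) = q - 1 := by omega
        have hje : j = ⟨q - 1, hqlt⟩ := Fin.ext this
        rw [hje, ← hqdef]
        exact h0
      · exact hpFq j hjq
    have hemp : 𝓕.F (q - 1) ∩ X = ∅ :=
      (hgen X hXL (q - 1) (by omega)).2 (by rw [hXdim]; omega)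
    exact absurd (Set.mem_inter hpF1 hpX) (by rw [hemp]; exact Set.notMem_empty p)
  have hppos : 0 < 𝓕.hq q p := lt_of_le_of_ne hp0 (Ne.symm hpne)
  -- every hyperplane through p is in parIdx A X
  have hApar : ∀ i : Fin n, A.α i p = 0 → i ∈ parIdx A X := by
    intro i hip
    by_contra hnot
    have hnle : ¬ tau X ≤ LinearMap.ker (A.α i).linear := hnot
    obtain ⟨v, hvX, hvk⟩ := SetLike.not_le_iff_exists.1 hnle
    set Y : Set (Fin ℓ → ℝ) := A.H i ∩ X with hYdef
    have hpY : p ∈ Y := ⟨hip, hpX⟩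
    obtain ⟨hXne, t, -, hXeq⟩ := hXL
    have hYL : A.L Y := by
      refine ⟨⟨p, hpY⟩, insert i t, Set.subset_univ _, ?_⟩
      rw [Set.biInter_insert, ← hXeq]
    -- tau Y ≤ ker (α i).linear
    have hYker : tau Y ≤ LinearMap.ker (A.α i).linear := by
      rw [tau, direction_affineSpan, vectorSpan_def]
      rw [Submodule.span_le]
      rintro w ⟨a, ha, b, hb, rfl⟩
      have ha0 : A.α i a = 0 := ha.1
      have hb0 : A.α i b = 0 := hb.1
      have : (A.α i).linear (a -ᵥ b) = A.α i a -ᵥ A.α i b := (A.α i).linearMap_vsub a b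
      simp only [SetLike.mem_coe, LinearMap.mem_ker]
      rw [this, ha0, hb0]
      simp
    have hYX : tau Y ≤ tau X :=
      AffineSubspace.direction_le (affineSpan_mono ℝ Set.inter_subset_right)
    have hYlt : tau Y < tau X := by
      refine lt_of_le_of_ne hYX ?_
      intro heq2
      rw [← heq2] at hvX
      exact hvk (hYker hvX)
    have hdimlt : dimS Y < dimS X :=
      Submodule.finrank_lt_finrank_of_lt hYlt
    have hemp : 𝓕.F q ∩ Y = ∅ :=
      (hgen Y hYL q hq).2 (by omega)
    exact absurd (Set.mem_inter hpFq hpY) (by rw [hemp]; exact Set.notMem_empty p)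
  -- sign cell descriptions
  have hCcell : C = {y | ∀ i ∈ (Set.univ : Set (Fin n)), 0 < A.α i x₀ * A.α i y} := by
    rw [hCeq]; exact chamber_eq_cell A Set.univ x₀ hx₀
  have hCtcell : Ct = {y | ∀ i ∈ parIdx A X, 0 < A.α i x₁ * A.α i y} := by
    rw [hCteq]; exact chamber_eq_cell A (parIdx A X) x₁ hx₁
  have hx₀C : x₀ ∈ C := by rw [hCeq]; exact mem_connectedComponentIn hx₀
  have hx₀Ct : x₀ ∈ Ct := hCCt hx₀C
  -- for i ∈ parIdx, α i x₀ and α i z have the same sign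
  have hsign : ∀ i ∈ parIdx A X, 0 < A.α i x₀ * A.α i z := by
    intro i hi
    have h1' : 0 < A.α i x₁ * A.α i x₀ := by
      rw [hCtcell] at hx₀Ct; exact hx₀Ct i hi
    have h2' : 0 < A.α i x₁ * A.α i z := by
      rw [hCtcell] at hzCt; exact hzCt i hi
    nlinarith [mul_pos h1' h2', sq_nonneg (A.α i x₁)]
  -- p is in the closure of C, so signs are weakly those of C
  have hpclC : p ∈ closure C :=
    closure_mono Set.inter_subset_left hpcl
  have hwk : ∀ i : Fin n, 0 ≤ A.α i x₀ * A.α i p := by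
    intro i
    have hcl : closure C ⊆ {y | 0 ≤ A.α i x₀ * A.α i y} := by
      apply closure_minimal
      · intro y hy
        rw [hCcell] at hy
        exact (hy i (Set.mem_univ i)).le
      · exact isClosed_le continuous_const (continuous_const.mul (hcont i))
    exact hcl hpclC
  -- eventually, points on the segment from p to z are in C
  have hev : ∀ᶠ s in nhdsWithin (0:ℝ) (Set.Ioi 0),
      ∀ i : Fin n, 0 < A.α i x₀ * A.α i (AffineMap.lineMap p z s) := by
    rw [Filter.eventually_all]
    intro i
    have hform : ∀ s : ℝ, A.α i (AffineMap.lineMap p z s)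
        = A.α i p + s * (A.α i z - A.α i p) := by
      intro s
      rw [(A.α i).apply_lineMap, AffineMap.lineMap_apply_module]
      simp only [smul_eq_mul]
      ring
    by_cases hip : A.α i p = 0
    · have hipar : i ∈ parIdx A X := hApar i hip
      have hzpos : 0 < A.α i x₀ * A.α i z := hsign i hipar
      filter_upwards [self_mem_nhdsWithin] with s hs
      rw [hform, hip]
      have : 0 < s * (A.α i x₀ * A.α i z) := mul_pos hs hzpos
      nlinarith [this]
    · have h0 : 0 < A.α i x₀ * A.α i p := by
        refine lt_of_le_of_ne (hwk i) ?_
        have hx₀i : A.α i x₀ ≠ 0 := hx₀ i (Set.mem_univ i)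
        exact (mul_ne_zero hx₀i hip).symm
      have hgc : Continuous fun s : ℝ =>
          A.α i x₀ * (A.α i p + s * (A.α i z - A.α i p)) := by
        fun_prop
      have hval : (fun s : ℝ => A.α i x₀ * (A.α i p + s * (A.α i z - A.α i p))) 0
          = A.α i x₀ * A.α i p := by simp
      have hev2 : ∀ᶠ s in nhds (0:ℝ),
          0 < A.α i x₀ * (A.α i p + s * (A.α i z - A.α i p)) := by
        have := hgc.continuousAt (x := (0:ℝ))
        have hmem : Set.Ioi (0:ℝ) ∈ nhds (A.α i x₀ * A.α i p) := Ioi_mem_nhds h0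
        have := this.preimage_mem_nhds (by simpa using hmem)
        filter_upwards [this] with s hs using hs
      filter_upwards [hev2.filter_mono nhdsWithin_le_nhds] with s hs
      rw [hform]
      exact hs
  obtain ⟨s, hsC, hs⟩ := (hev.and self_mem_nhdsWithin).exists
  have hspos : (0:ℝ) < s := hs
  -- the point w := lineMap p z s is in C ∩ F^q
  set w : Fin ℓ → ℝ := AffineMap.lineMap p z s with hwdef
  have hwC : w ∈ C := by
    rw [hCcell]
    intro i _
    exact hsC i
  have hwF : w ∈ 𝓕.F q := by
    intro j hj
    have hp' : 𝓕.h j p = 0 := hpFq j hj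
    have hz' : 𝓕.h j z = 0 := hzFq j hj
    rw [hwdef, (𝓕.h j).apply_lineMap, AffineMap.lineMap_apply_module, hp', hz']
    simp
  -- contradiction with minimality of h_q at p
  have hwval : 𝓕.hq q w = (1 - s) * 𝓕.hq q p := by
    rw [hwdef, hqdef]
    rw [(𝓕.h ⟨q - 1, hqlt⟩).apply_lineMap, AffineMap.lineMap_apply_module]
    have : 𝓕.h ⟨q - 1, hqlt⟩ z = 0 := by rw [← hqdef]; exact hqz
    rw [this]
    simp only [smul_eq_mul]
    ring
  have hmin := hpmin w (subset_closure ⟨hwC, hwF⟩)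
  rw [hwval] at hmin
  nlinarith [hmin, hppos, hspos]


end IY
end

section
/- Let C, C' ∈ ch^q_F(A). If h_q(X_C ∩ F^q) < h_q(X_{C'} ∩ F^q) (values of h_q at the unique points of X_C ∩ F^q and X_{C'} ∩ F^q), then A_{X_{C'}} ∩ Sep(C, C') ≠ ∅, i.e. some hyperplane of A containing X_{C'} separates C from C'. -/
open Set

namespace IY
open Arrangement

private noncomputable def zeroSub {ℓ : ℕ} (f : (Fin ℓ → ℝ) →ᵃ[ℝ] ℝ) : AffineSubspace ℝ (Fin ℓ → ℝ) where
  carrier := {x | f x = 0}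
  smul_vsub_vadd_mem' c p₁ p₂ p₃ h₁ h₂ h₃ := by
    simp only [Set.mem_setOf_eq] at *
    rw [AffineMap.map_vadd, f.linear.map_smul, AffineMap.linearMap_vsub]
    simp [h₁, h₂, h₃]

private lemma alpha_cont {ℓ n : ℕ} (A : Arrangement ℓ n) (i : Fin n) :
    Continuous (A.α i) := (A.α i).continuous_of_finiteDimensional

private lemma chamber_ne {ℓ n : ℕ} (A : Arrangement ℓ n) {C : Set (Fin ℓ → ℝ)}
    (hC : A.IsChamber C) {z : Fin ℓ → ℝ} (hz : z ∈ C) (i : Fin n) : A.α i z ≠ 0 := by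
  obtain ⟨x, hx, rfl⟩ := hC
  exact (connectedComponentIn_subset _ _ hz) i (Set.mem_univ i)

private lemma chamber_sign {ℓ n : ℕ} (A : Arrangement ℓ n) {C : Set (Fin ℓ → ℝ)}
    (hC : A.IsChamber C) (i : Fin n) {y z : Fin ℓ → ℝ} (hy : y ∈ C) (hz : z ∈ C)
    (hpos : 0 < A.α i y) : 0 < A.α i z := by
  have hz0 := chamber_ne A hC hz i
  by_contra hcon
  have hzneg : A.α i z < 0 := lt_of_le_of_ne (not_lt.mp hcon) hz0
  obtain ⟨x, hx, hCeq⟩ := hC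
  have hpre : IsPreconnected C := by
    rw [hCeq]; exact (isConnected_connectedComponentIn_iff.mpr hx).isPreconnected
  have himg := hpre.intermediate_value hz hy ((alpha_cont A i).continuousOn)
  obtain ⟨w, hwC, hw0⟩ := himg ⟨le_of_lt hzneg, le_of_lt hpos⟩
  exact chamber_ne A ⟨x, hx, hCeq⟩ hwC i hw0

private lemma chamber_sign_neg {ℓ n : ℕ} (A : Arrangement ℓ n) {C : Set (Fin ℓ → ℝ)}
    (hC : A.IsChamber C) (i : Fin n) {y z : Fin ℓ → ℝ} (hy : y ∈ C) (hz : z ∈ C)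
    (hneg : A.α i y < 0) : A.α i z < 0 := by
  have hz0 := chamber_ne A hC hz i
  by_contra hcon
  have hzpos : 0 < A.α i z := lt_of_le_of_ne (not_lt.mp hcon) (Ne.symm hz0)
  have := chamber_sign A hC i hz hy hzpos
  linarith

private lemma mem_chamber_of_signs {ℓ n : ℕ} (A : Arrangement ℓ n) {C : Set (Fin ℓ → ℝ)}
    (hC : A.IsChamber C) {v u : Fin ℓ → ℝ} (hv : v ∈ C)
    (hsgn : ∀ i, (0 < A.α i v → 0 < A.α i u) ∧ (A.α i v < 0 → A.α i u < 0)) : u ∈ C := by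
  obtain ⟨x, hx, rfl⟩ := hC
  have hvF : v ∈ A.compOn Set.univ := connectedComponentIn_subset _ _ hv
  set S : Set (Fin ℓ → ℝ) :=
    ⋂ i : Fin n, (A.α i) ⁻¹' (if 0 < A.α i v then Set.Ioi (0:ℝ) else Set.Iio 0) with hS
  have hconv : Convex ℝ S := convex_iInter fun i => by
    split_ifs
    · exact (convex_Ioi (0:ℝ)).affine_preimage (A.α i)
    · exact (convex_Iio (0:ℝ)).affine_preimage (A.α i)
  have hvS : v ∈ S := Set.mem_iInter.mpr fun i => by
    by_cases h : 0 < A.α i v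
    · rw [if_pos h]; exact h
    · have h' : A.α i v < 0 := lt_of_le_of_ne (not_lt.mp h) (hvF i (Set.mem_univ i))
      rw [if_neg h]; exact h'
  have huS : u ∈ S := Set.mem_iInter.mpr fun i => by
    by_cases h : 0 < A.α i v
    · rw [if_pos h]; exact (hsgn i).1 h
    · have h' : A.α i v < 0 := lt_of_le_of_ne (not_lt.mp h) (hvF i (Set.mem_univ i))
      rw [if_neg h]; exact (hsgn i).2 h'
  have hSsub : S ⊆ A.compOn Set.univ := by
    intro w hw i _
    have hmem := Set.mem_iInter.mp hw i
    split_ifs at hmem with h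
    · exact ne_of_gt hmem
    · exact ne_of_lt hmem
  have hsub := hconv.isPreconnected.subset_connectedComponentIn hvS hSsub
  rw [connectedComponentIn_eq hv]
  exact hsub huS

private lemma F_lineMap {ℓ : ℕ} (𝓕 : Flag ℓ) {q : ℕ} {a b : Fin ℓ → ℝ}
    (ha : a ∈ 𝓕.F q) (hb : b ∈ 𝓕.F q) (t : ℝ) : AffineMap.lineMap a b t ∈ 𝓕.F q := by
  intro j hj
  rw [AffineMap.apply_lineMap, ha j hj, hb j hj]
  simp [AffineMap.lineMap_apply_module]

private lemma lineMap_real (a b t : ℝ) :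
    (AffineMap.lineMap a b : ℝ →ᵃ[ℝ] ℝ) t = (1 - t) * a + t * b := by
  simp [AffineMap.lineMap_apply_module, smul_eq_mul]

private lemma closure_nonneg {ℓ n : ℕ} (A : Arrangement ℓ n) (i : Fin n)
    {D : Set (Fin ℓ → ℝ)} (hD : ∀ y ∈ D, 0 < A.α i y) :
    ∀ z ∈ closure D, 0 ≤ A.α i z := fun z hz =>
  closure_minimal (fun y hy => (hD y hy).le)
    (isClosed_le continuous_const (alpha_cont A i)) hz

private lemma closure_nonpos {ℓ n : ℕ} (A : Arrangement ℓ n) (i : Fin n)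
    {D : Set (Fin ℓ → ℝ)} (hD : ∀ y ∈ D, A.α i y < 0) :
    ∀ z ∈ closure D, A.α i z ≤ 0 := fun z hz =>
  closure_minimal (fun y hy => (hD y hy).le)
    (isClosed_le (alpha_cont A i) continuous_const) hz


/-- If `C, C' ∈ ch^q_F(A)` and
`h_q(X_C ∩ F^q) < h_q(X_{C'} ∩ F^q)`, then some hyperplane of `A` containing
`X_{C'}` separates `C` from `C'`. -/
theorem height_lt_sep (ℓ n : ℕ) (A : Arrangement ℓ n) (𝓕 : Flag ℓ)
    (hind : LinearIndependent ℝ fun j : Fin ℓ => (𝓕.h j).linear)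
    (hgen : GenericFlag A 𝓕)
    (h1 : Cond1On A Set.univ 𝓕) (h2 : Cond2On A Set.univ 𝓕)
    (q : ℕ) (hq2 : q ≤ ℓ)
    (C C' X X' : Set (Fin ℓ → ℝ)) (p p' : Fin ℓ → ℝ)
    (hC : ChF A 𝓕 q C) (hC' : ChF A 𝓕 q C')
    (hX : IsXC A 𝓕 q C X) (hX' : IsXC A 𝓕 q C' X')
    (hp : X ∩ 𝓕.F q = {p}) (hp' : X' ∩ 𝓕.F q = {p'})
    (hlt : 𝓕.hq q p < 𝓕.hq q p') :
    ∃ i : Fin n, X' ⊆ A.H i ∧ SepCh A C C' i := by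
  by_contra hcon
  push_neg at hcon
  -- unpack the minimizer data
  obtain ⟨hLX, hdimX, p₀, hXsing, hpc₀, hpmin₀⟩ := hX
  obtain ⟨hLX', hdimX', p₀', hX'sing, hpc₀', hpmin₀'⟩ := hX'
  have hpq : p₀ = p := Set.singleton_eq_singleton_iff.mp (hXsing.symm.trans hp)
  have hpq' : p₀' = p' := Set.singleton_eq_singleton_iff.mp (hX'sing.symm.trans hp')
  rw [hpq] at hpc₀ hpmin₀
  rw [hpq'] at hpc₀' hpmin₀'
  have hpmem : p ∈ X ∩ 𝓕.F q := by rw [hp]; exact Set.mem_singleton p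
  have hp'mem : p' ∈ X' ∩ 𝓕.F q := by rw [hp']; exact Set.mem_singleton p'
  have hpF : p ∈ 𝓕.F q := hpmem.2
  have hp'X : p' ∈ X' := hp'mem.1
  have hp'F : p' ∈ 𝓕.F q := hp'mem.2
  obtain ⟨y₀, hy₀C, hy₀F⟩ := hC'.2.1
  obtain ⟨y₁, hy₁C, -⟩ := hC.2.1
  have hpclC : p ∈ closure C := closure_mono Set.inter_subset_left hpc₀
  have hp'clC : p' ∈ closure C' := closure_mono Set.inter_subset_left hpc₀'
  -- Claim 1: every hyperplane through p' contains X'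
  have claim1 : ∀ i : Fin n, A.α i p' = 0 → X' ⊆ A.H i := by
    intro i hi0
    by_contra hns
    obtain ⟨hne', t, -, hXt⟩ := hLX'
    have hp'' : p' ∈ X' ∩ A.H i := ⟨hp'X, hi0⟩
    have hL'' : A.L (X' ∩ A.H i) := by
      refine ⟨⟨p', hp''⟩, insert i t, Set.subset_univ _, ?_⟩
      rw [Set.biInter_insert, ← hXt, Set.inter_comm]
    have hspanle : affineSpan ℝ (X' ∩ A.H i) ≤ affineSpan ℝ X' :=
      affineSpan_mono ℝ Set.inter_subset_left
    have hltspan : affineSpan ℝ (X' ∩ A.H i) < affineSpan ℝ X' := by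
      refine lt_of_le_of_ne hspanle ?_
      intro heq
      apply hns
      intro x hx
      have h1 : x ∈ (affineSpan ℝ (X' ∩ A.H i) : Set (Fin ℓ → ℝ)) := by
        rw [heq]; exact subset_affineSpan ℝ X' hx
      have h2 : affineSpan ℝ (X' ∩ A.H i) ≤ zeroSub (A.α i) :=
        affineSpan_le.mpr fun z hz => hz.2
      exact h2 h1
    have hdir : (affineSpan ℝ (X' ∩ A.H i)).direction < (affineSpan ℝ X').direction :=
      AffineSubspace.direction_lt_of_nonempty hltspan ⟨p', subset_affineSpan ℝ _ hp''⟩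
    have hdd : dimS (X' ∩ A.H i) < dimS X' := Submodule.finrank_lt_finrank_of_lt hdir
    have hempty := (hgen (X' ∩ A.H i) hL'' q hq2).2 (by rw [hdimX'] at hdd; omega)
    rw [Set.eq_empty_iff_forall_notMem] at hempty
    exact hempty p' ⟨hp'F, hp''⟩
  -- same-side information for hyperplanes containing X'
  have hSep : ∀ i : Fin n, X' ⊆ A.H i →
      (0 < A.α i y₀ → 0 ≤ A.α i p) ∧ (A.α i y₀ < 0 → A.α i p ≤ 0) := by
    intro i hXH
    have hnsep := hcon i hXH
    constructor
    · intro hy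
      have hC'pos : ∀ z ∈ C', 0 < A.α i z := fun z hz => chamber_sign A hC'.1 i hy₀C hz hy
      by_contra hnp
      push_neg at hnp
      have hy₁neg : A.α i y₁ < 0 := by
        rcases lt_or_gt_of_ne (chamber_ne A hC.1 hy₁C i) with h | h
        · exact h
        · have hCpos : ∀ z ∈ C, 0 < A.α i z := fun z hz => chamber_sign A hC.1 i hy₁C hz h
          have := closure_nonneg A i hCpos p hpclC
          linarith
      have hCneg : ∀ z ∈ C, A.α i z < 0 :=
        fun z hz => chamber_sign_neg A hC.1 i hy₁C hz hy₁neg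
      exact hnsep (Or.inr ⟨hCneg, hC'pos⟩)
    · intro hy
      have hC'neg : ∀ z ∈ C', A.α i z < 0 := fun z hz => chamber_sign_neg A hC'.1 i hy₀C hz hy
      by_contra hnp
      push_neg at hnp
      have hy₁pos : 0 < A.α i y₁ := by
        rcases lt_or_gt_of_ne (chamber_ne A hC.1 hy₁C i) with h | h
        · have hCneg : ∀ z ∈ C, A.α i z < 0 :=
            fun z hz => chamber_sign_neg A hC.1 i hy₁C hz h
          have := closure_nonpos A i hCneg p hpclC
          linarith
        · exact h
      have hCpos : ∀ z ∈ C, 0 < A.α i z := fun z hz => chamber_sign A hC.1 i hy₁C hz hy₁pos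
      exact hnsep (Or.inl ⟨hCpos, hC'neg⟩)
  -- the filter of small positive parameters
  set l : Filter ℝ := nhdsWithin 0 (Set.Ioo (0:ℝ) 1) with hl
  have hne : l.NeBot := by
    rw [hl]
    refine mem_closure_iff_nhdsWithin_neBot.mp ?_
    rw [closure_Ioo (by norm_num : (0:ℝ) ≠ 1)]
    exact ⟨le_refl 0, by norm_num⟩
  -- weak sign control along the segment from p' to p
  have hev : ∀ i : Fin n, ∀ᶠ t in l,
      (0 < A.α i y₀ → 0 ≤ A.α i (AffineMap.lineMap p' p t)) ∧
      (A.α i y₀ < 0 → A.α i (AffineMap.lineMap p' p t) ≤ 0) := by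
    intro i
    by_cases h0 : A.α i p' = 0
    · have hside := hSep i (claim1 i h0)
      filter_upwards [self_mem_nhdsWithin] with t ht
      have hcalc : A.α i (AffineMap.lineMap p' p t) = (1 - t) * A.α i p' + t * A.α i p := by
        rw [AffineMap.apply_lineMap, lineMap_real]
      rw [hcalc, h0]
      constructor
      · intro hy
        have := hside.1 hy
        nlinarith [ht.1, ht.2]
      · intro hy
        have := hside.2 hy
        nlinarith [ht.1, ht.2]
    · have hcontg : Continuous fun t : ℝ => A.α i (AffineMap.lineMap p' p t) :=
        (alpha_cont A i).comp
          (AffineMap.lineMap p' p : ℝ →ᵃ[ℝ] (Fin ℓ → ℝ)).continuous_of_finiteDimensional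
      have h00 : A.α i (AffineMap.lineMap p' p (0:ℝ)) = A.α i p' := by
        rw [AffineMap.lineMap_apply_zero]
      rcases lt_or_gt_of_ne (chamber_ne A hC'.1 hy₀C i) with hy | hy
      · have hC'neg : ∀ z ∈ C', A.α i z < 0 :=
          fun z hz => chamber_sign_neg A hC'.1 i hy₀C hz hy
        have hp'neg : A.α i p' < 0 :=
          lt_of_le_of_ne (closure_nonpos A i hC'neg p' hp'clC) h0
        have hev0 : ∀ᶠ t in nhds (0:ℝ), A.α i (AffineMap.lineMap p' p t) < 0 := by
          have htd := hcontg.tendsto 0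
          rw [h00] at htd
          exact htd (Iio_mem_nhds hp'neg)
        filter_upwards [hev0.filter_mono nhdsWithin_le_nhds] with t ht
        exact ⟨fun h => absurd h (by linarith), fun _ => ht.le⟩
      · have hC'pos : ∀ z ∈ C', 0 < A.α i z :=
          fun z hz => chamber_sign A hC'.1 i hy₀C hz hy
        have hp'pos : 0 < A.α i p' :=
          lt_of_le_of_ne (closure_nonneg A i hC'pos p' hp'clC) (Ne.symm h0)
        have hev0 : ∀ᶠ t in nhds (0:ℝ), 0 < A.α i (AffineMap.lineMap p' p t) := by
          have htd := hcontg.tendsto 0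
          rw [h00] at htd
          exact htd (Ioi_mem_nhds hp'pos)
        filter_upwards [hev0.filter_mono nhdsWithin_le_nhds] with t ht
        exact ⟨fun _ => ht.le, fun h => absurd h (by linarith)⟩
  have hE2 : ∀ᶠ t in l, 𝓕.hq q (AffineMap.lineMap p' p t) < 𝓕.hq q p' := by
    filter_upwards [self_mem_nhdsWithin] with t ht
    have hcalc : 𝓕.hq q (AffineMap.lineMap p' p t)
        = (1 - t) * 𝓕.hq q p' + t * 𝓕.hq q p := by
      rw [AffineMap.apply_lineMap, lineMap_real]
    rw [hcalc]
    nlinarith [ht.1, ht.2]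
  obtain ⟨t, hwk, hE2t⟩ := ((Filter.eventually_all.mpr hev).and hE2).exists
  set w₀ : Fin ℓ → ℝ := AffineMap.lineMap p' p t with hw₀
  have hwF : w₀ ∈ 𝓕.F q := F_lineMap 𝓕 hp'F hpF t
  -- w₀ lies in the closure of C' ∩ F^q
  have hwcl : w₀ ∈ closure (C' ∩ 𝓕.F q) := by
    have hvmem : ∀ s ∈ Set.Ioo (0:ℝ) 1, AffineMap.lineMap w₀ y₀ s ∈ C' ∩ 𝓕.F q := by
      intro s hs
      refine ⟨mem_chamber_of_signs A hC'.1 hy₀C fun i => ?_, F_lineMap 𝓕 hwF hy₀F s⟩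
      have hcalc : A.α i (AffineMap.lineMap w₀ y₀ s)
          = (1 - s) * A.α i w₀ + s * A.α i y₀ := by
        rw [AffineMap.apply_lineMap, lineMap_real]
      constructor
      · intro hy
        rw [hcalc]
        have := (hwk i).1 hy
        nlinarith [hs.1, hs.2]
      · intro hy
        rw [hcalc]
        have := (hwk i).2 hy
        nlinarith [hs.1, hs.2]
    have htend : Filter.Tendsto (fun s : ℝ => AffineMap.lineMap w₀ y₀ s) l (nhds w₀) := by
      have hc : Continuous fun s : ℝ => AffineMap.lineMap w₀ y₀ s :=
        (AffineMap.lineMap w₀ y₀ : ℝ →ᵃ[ℝ] (Fin ℓ → ℝ)).continuous_of_finiteDimensional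
      have htd := hc.tendsto 0
      rw [AffineMap.lineMap_apply_zero] at htd
      exact htd.mono_left nhdsWithin_le_nhds
    exact mem_closure_of_tendsto htend
      (by filter_upwards [self_mem_nhdsWithin] with s hs; exact hvmem s hs)
  have := hpmin₀' w₀ hwcl
  linarith


end IY
end

section
/- For every C ∈ ch^q_F(A), the set of real parts of S(C), namely {x ∈ ℝ^ℓ : x + iv ∈ S(C) for some v ∈ ℝ^ℓ}, equals tilde(C). -/
open Set

namespace IY
open Arrangement

/-- A real vector space is not covered by finitely many proper subspaces. -/
lemma avoid_lemma {n : ℕ} {M : Type*} [AddCommGroup M] [Module ℝ M]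
    (T : Submodule ℝ M) (f : Fin n → M →ₗ[ℝ] ℝ) (P : Fin n → Prop)
    (hP : ∀ i, P i → ∃ u ∈ T, f i u ≠ 0) :
    ∃ v ∈ T, ∀ i, P i → f i v ≠ 0 := by
  classical
  by_contra hcon
  push_neg at hcon
  obtain ⟨i₀, hPi₀, -⟩ := hcon 0 T.zero_mem
  obtain ⟨u, huT, hu0⟩ := hP i₀ hPi₀
  have : Nontrivial T := by
    refine nontrivial_of_ne ⟨u, huT⟩ 0 fun h => hu0 ?_
    have hu : u = 0 := by simpa using congrArg Subtype.val h
    simp [hu]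
  set p : Fin n → Subspace ℝ T := fun i =>
    if P i then LinearMap.ker ((f i).comp T.subtype) else ⊥ with hp
  have hcover : ⋃ i, (p i : Set T) = Set.univ := by
    rw [Set.eq_univ_iff_forall]
    intro w
    obtain ⟨i, hPi, hfi⟩ := hcon w.1 w.2
    refine Set.mem_iUnion.mpr ⟨i, ?_⟩
    simp only [hp, if_pos hPi, SetLike.mem_coe, LinearMap.mem_ker, LinearMap.comp_apply,
      Submodule.subtype_apply]
    exact hfi
  obtain ⟨i, hi⟩ := Subspace.exists_eq_top_of_iUnion_eq_univ hcover
  by_cases hPi : P i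
  · obtain ⟨u', hu'T, hu'0⟩ := hP i hPi
    rw [hp] at hi
    simp only [if_pos hPi] at hi
    rw [LinearMap.ker_eq_top] at hi
    have : ((f i).comp T.subtype) ⟨u', hu'T⟩ = 0 := by rw [hi]; rfl
    exact hu'0 (by simpa using this)
  · rw [hp] at hi
    simp only [if_neg hPi] at hi
    exact bot_ne_top hi

/-- If the form changes sign (weakly) between the endpoints, it vanishes on the segment. -/
lemma sep_of_mul_nonpos {ℓ n : ℕ} (A : Arrangement ℓ n) (i : Fin n) (p₁ p₂ : Fin ℓ → ℝ)
    (h : A.α i p₁ * A.α i p₂ ≤ 0) : SepPt A p₁ p₂ i := by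
  have hcont : ContinuousOn (A.α i) (segment ℝ p₁ p₂) :=
    (A.α i).continuous_of_finiteDimensional.continuousOn
  have hpc : IsPreconnected (segment ℝ p₁ p₂) := (convex_segment p₁ p₂).isPreconnected
  rcases mul_nonpos_iff.mp h with ⟨h1, h2⟩ | ⟨h1, h2⟩
  · obtain ⟨w, hw, hw0⟩ := hpc.intermediate_value (right_mem_segment ℝ p₁ p₂)
      (left_mem_segment ℝ p₁ p₂) hcont ⟨h2, h1⟩
    exact ⟨w, hw, hw0⟩
  · obtain ⟨w, hw, hw0⟩ := hpc.intermediate_value (left_mem_segment ℝ p₁ p₂)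
      (right_mem_segment ℝ p₁ p₂) hcont ⟨h1, h2⟩
    exact ⟨w, hw, hw0⟩

/-- If the form has the same strict sign at the endpoints, it has no zero on the segment. -/
lemma no_sep_of_mul_pos {ℓ n : ℕ} (A : Arrangement ℓ n) (i : Fin n) (p₁ p₂ : Fin ℓ → ℝ)
    (h : 0 < A.α i p₁ * A.α i p₂) : ∀ w ∈ segment ℝ p₁ p₂, A.α i w ≠ 0 := by
  intro w hw
  rw [segment_eq_image_lineMap] at hw
  obtain ⟨t, ht, rfl⟩ := hw
  rw [AffineMap.apply_lineMap, AffineMap.lineMap_apply_module]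
  simp only [smul_eq_mul]
  intro heq
  rcases mul_pos_iff.mp h with ⟨h1, h2⟩ | ⟨h1, h2⟩
  · rcases lt_or_ge t 1 with h3 | h3
    · nlinarith [mul_pos (by linarith : (0:ℝ) < 1 - t) h1, mul_nonneg ht.1 h2.le]
    · have ht1 : t = 1 := le_antisymm ht.2 h3
      rw [ht1] at heq
      nlinarith
  · rcases lt_or_ge t 1 with h3 | h3
    · nlinarith [mul_pos (by linarith : (0:ℝ) < 1 - t) (neg_pos.mpr h1),
        mul_nonneg ht.1 (neg_nonneg.mpr h2.le)]
    · have ht1 : t = 1 := le_antisymm ht.2 h3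
      rw [ht1] at heq
      nlinarith

/-- The chamber of the subarrangement containing `x₀` is the open sign cell of `x₀`. -/
lemma comp_component_eq {ℓ n : ℕ} (A : Arrangement ℓ n) (s : Set (Fin n))
    {x₀ : Fin ℓ → ℝ} (hx₀ : x₀ ∈ A.compOn s) :
    connectedComponentIn (A.compOn s) x₀ = {x | ∀ i ∈ s, 0 < A.α i x * A.α i x₀} := by
  apply Set.Subset.antisymm
  · intro y hy i hi
    have hysub : y ∈ A.compOn s := connectedComponentIn_subset _ _ hy
    by_contra hle
    push_neg at hle
    have hy0 : A.α i y ≠ 0 := hysub i hi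
    have hx00 : A.α i x₀ ≠ 0 := hx₀ i hi
    have hne : A.α i y * A.α i x₀ < 0 := lt_of_le_of_ne hle (mul_ne_zero hy0 hx00)
    have hpc := isPreconnected_connectedComponentIn (F := A.compOn s) (x := x₀)
    have hcont : ContinuousOn (fun z => A.α i z * A.α i x₀)
        (connectedComponentIn (A.compOn s) x₀) :=
      ((A.α i).continuous_of_finiteDimensional.mul continuous_const).continuousOn
    have h0 : (0:ℝ) ∈ Set.Icc (A.α i y * A.α i x₀) (A.α i x₀ * A.α i x₀) :=
      ⟨hne.le, mul_self_nonneg _⟩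
    obtain ⟨z, hz, hz0⟩ := hpc.intermediate_value hy (mem_connectedComponentIn hx₀) hcont h0
    have hz0' : A.α i z = 0 := by
      rcases mul_eq_zero.mp hz0 with h | h
      · exact h
      · exact absurd h hx00
    exact (connectedComponentIn_subset _ _ hz i hi) hz0'
  · intro y hy
    have hx₀mem : x₀ ∈ {x | ∀ i ∈ s, 0 < A.α i x * A.α i x₀} := fun i hi =>
      mul_self_pos.mpr (hx₀ i hi)
    have hsub : {x | ∀ i ∈ s, 0 < A.α i x * A.α i x₀} ⊆ A.compOn s := by
      intro z hz i hi
      intro h0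
      have := hz i hi
      rw [h0, zero_mul] at this
      exact lt_irrefl _ this
    have hconv : Convex ℝ {x | ∀ i ∈ s, 0 < A.α i x * A.α i x₀} := by
      have heq : {x | ∀ i ∈ s, 0 < A.α i x * A.α i x₀} =
          ⋂ i ∈ s, {x | 0 < A.α i x * A.α i x₀} := by
        ext z; simp [Set.mem_iInter]
      rw [heq]
      refine convex_iInter fun i => convex_iInter fun hi => ?_
      rcases lt_or_gt_of_ne (hx₀ i hi) with h | h
      · have heq2 : {x | 0 < A.α i x * A.α i x₀} = (A.α i) ⁻¹' Set.Iio 0 := by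
          ext z
          simp only [Set.mem_setOf_eq, Set.mem_preimage, Set.mem_Iio]
          constructor
          · intro hz; nlinarith
          · intro hz; nlinarith
        rw [heq2]
        exact (convex_Iio (0:ℝ)).affine_preimage (A.α i)
      · have heq2 : {x | 0 < A.α i x * A.α i x₀} = (A.α i) ⁻¹' Set.Ioi 0 := by
          ext z
          simp only [Set.mem_setOf_eq, Set.mem_preimage, Set.mem_Ioi]
          constructor
          · intro hz; nlinarith
          · intro hz; nlinarith
        rw [heq2]
        exact (convex_Ioi (0:ℝ)).affine_preimage (A.α i)
    exact hconv.isPreconnected.subset_connectedComponentIn hx₀mem hsub hy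

end IY

namespace IY
open Arrangement

/-- The set of real parts of `S(C)` equals `tilde(C)`. -/
theorem real_part_S_eq_tilde (ℓ n : ℕ) (A : Arrangement ℓ n) (𝓕 : Flag ℓ)
    (hind : LinearIndependent ℝ fun j : Fin ℓ => (𝓕.h j).linear)
    (hgen : GenericFlag A 𝓕)
    (h1 : Cond1On A Set.univ 𝓕) (h2 : Cond2On A Set.univ 𝓕)
    (q : ℕ) (hq2 : q ≤ ℓ)
    (C X : Set (Fin ℓ → ℝ))
    (hC : ChF A 𝓕 q C) (hX : IsXC A 𝓕 q C X)
    (pC : Fin ℓ → ℝ) (hpC : pC ∈ C ∩ 𝓕.F q)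
    (Ct : Set (Fin ℓ → ℝ)) (hCt : A.IsChamberOn (parIdx A X) Ct) (hCCt : C ⊆ Ct) :
    {x : Fin ℓ → ℝ | ∃ v : Fin ℓ → ℝ, mkC x v ∈ S A (tau X) pC} = Ct := by
  obtain ⟨x₀, hx₀c, hCtEq⟩ := hCt
  have hpCt : pC ∈ Ct := hCCt hpC.1
  rw [hCtEq] at hpCt
  have hpComp : pC ∈ A.compOn (parIdx A X) := connectedComponentIn_subset _ _ hpCt
  have hCtEq2 : Ct = connectedComponentIn (A.compOn (parIdx A X)) pC := by
    rw [hCtEq, connectedComponentIn_eq hpCt]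
  have hsign : Ct = {x | ∀ i ∈ parIdx A X, 0 < A.α i x * A.α i pC} := by
    rw [hCtEq2, comp_component_eq A _ hpComp]
  ext x
  simp only [Set.mem_setOf_eq]
  constructor
  · rintro ⟨v, hmem⟩
    obtain ⟨hvT, hv⟩ := hmem
    have hvT' : v ∈ tau X := hvT
    rw [hsign]
    intro i hi
    have hlin : (A.α i).linear v = 0 := hi hvT'
    have hnsep : ¬ SepPt A pC x i := fun hs => hv i hs hlin
    by_contra hle
    push_neg at hle
    exact hnsep (sep_of_mul_nonpos A i pC x (by rw [mul_comm]; exact hle))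
  · intro hx
    rw [hsign] at hx
    have key : ∀ i, SepPt A pC x i → ∃ u ∈ tau X, (A.α i).linear u ≠ 0 := by
      intro i hsep
      by_contra hno
      push_neg at hno
      have hi : i ∈ parIdx A X := by
        intro u hu
        exact LinearMap.mem_ker.mpr (hno u hu)
      have hpos := hx i hi
      obtain ⟨w, hw, hw0⟩ := hsep
      exact no_sep_of_mul_pos A i pC x (by rw [mul_comm]; exact hpos) w hw hw0
    obtain ⟨v, hvT, hv⟩ := avoid_lemma (tau X) (fun i => (A.α i).linear)
      (fun i => SepPt A pC x i) key
    exact ⟨v, hvT, fun i hs => hv i hs⟩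

end IY
end

section
/- For every C ∈ ch^q_F(A), the set S(C) is star-shaped with respect to p_C: for every z ∈ S(C) and every t ∈ [0, 1], the point (1 − t)·p_C + t·z belongs to S(C). In particular, S(C) is contractible. -/
open Set

/-!
Shrinking the real part `x` of `x + iv` towards `p_C` along the segment `[p_C, x]` can only
shrink `Sep(p_C, x)`, while scaling `v` by a positive factor keeps it in `τ(X_C)` and off every
`τ(H)`. At the end point `p_C` itself there is nothing to check, because `p_C` lies in a chamber
and hence on no hyperplane.
-/

namespace IY
open Arrangement

variable {ℓ n : ℕ}

lemma reP_smul_mkC_add_smul (a b : ℝ) (x v : Fin ℓ → ℝ) (z : Fin ℓ → ℂ) :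
    reP (a • mkC x v + b • z) = a • x + b • reP z := by
  funext j
  simp [reP, mkC]

lemma imP_smul_mkC_add_smul (a b : ℝ) (x v : Fin ℓ → ℝ) (z : Fin ℓ → ℂ) :
    imP (a • mkC x v + b • z) = a • v + b • imP z := by
  funext j
  simp [imP, mkC]

lemma Arrangement.IsChamberOn.subset_compOn_s9 {A : Arrangement ℓ n} {s : Set (Fin n)}
    {C : Set (Fin ℓ → ℝ)} (hC : A.IsChamberOn s C) : C ⊆ A.compOn s := by
  obtain ⟨x, -, rfl⟩ := hC
  exact connectedComponentIn_subset _ _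

lemma sepPt_self_iff (A : Arrangement ℓ n) (p : Fin ℓ → ℝ) (i : Fin n) :
    SepPt A p p i ↔ A.α i p = 0 := by
  simp [SepPt, segment_same]

lemma SepPt.of_mem_segment {A : Arrangement ℓ n} {p x y : Fin ℓ → ℝ} {i : Fin n}
    (hy : y ∈ segment ℝ p x) (h : SepPt A p y i) : SepPt A p x i := by
  obtain ⟨w, hw, hw0⟩ := h
  exact ⟨w, (convex_segment p x).segment_subset (left_mem_segment ℝ p x) hy hw, hw0⟩

lemma mkC_mem_S (A : Arrangement ℓ n) (T : Submodule ℝ (Fin ℓ → ℝ)) {p : Fin ℓ → ℝ}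
    (hp : p ∈ A.compOn univ) : mkC p 0 ∈ S A T p := by
  have hre : reP (mkC p 0) = p := by funext j; simp [reP, mkC]
  have him : imP (mkC p 0) = 0 := by funext j; simp [imP, mkC]
  refine ⟨him ▸ T.zero_mem, fun i hi => ?_⟩
  rw [hre, sepPt_self_iff] at hi
  exact absurd hi (hp i (mem_univ i))

lemma starConvex_S (A : Arrangement ℓ n) (T : Submodule ℝ (Fin ℓ → ℝ)) {p : Fin ℓ → ℝ}
    (hp : p ∈ A.compOn univ) : StarConvex ℝ (mkC p 0) (S A T p) := by
  refine (starConvex_iff_forall_pos (mkC_mem_S A T hp)).2 ?_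
  rintro z ⟨hv, hsep⟩ a b ha hb hab
  rw [S, mem_ofPred_eq, reP_smul_mkC_add_smul, imP_smul_mkC_add_smul, smul_zero, zero_add]
  refine ⟨T.smul_mem b hv, fun i hi => ?_⟩
  have hseg : a • p + b • reP z ∈ segment ℝ p (reP z) := ⟨a, b, ha.le, hb.le, hab, rfl⟩
  rw [map_smul, smul_eq_mul]
  exact mul_ne_zero hb.ne' (hsep i (hi.of_mem_segment hseg))

theorem S_starShaped_contractible_general (ℓ n : ℕ) (A : Arrangement ℓ n) (𝓕 : Flag ℓ)
    (q : ℕ)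
    (C X : Set (Fin ℓ → ℝ))
    (hC : ChF A 𝓕 q C)
    (pC : Fin ℓ → ℝ) (hpC : pC ∈ C ∩ 𝓕.F q) :
    (∀ z ∈ S A (tau X) pC, ∀ t ∈ Set.Icc (0 : ℝ) 1,
        (1 - t) • mkC pC 0 + t • z ∈ S A (tau X) pC) ∧
    ContractibleSpace (S A (tau X) pC) := by
  have hpC_comp : pC ∈ A.compOn univ := hC.1.subset_compOn_s9 hpC.1
  have hstar := starConvex_S A (tau X) hpC_comp
  refine ⟨fun z hz t ht => hstar hz (by linarith [ht.2]) ht.1 (by ring), ?_⟩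
  exact hstar.contractibleSpace ⟨_, mkC_mem_S A (tau X) hpC_comp⟩

/-- `S(C)` is star-shaped with respect to the base point `p_C`;
in particular it is contractible. -/
theorem S_starShaped_contractible (ℓ n : ℕ) (A : Arrangement ℓ n) (𝓕 : Flag ℓ)
    (hind : LinearIndependent ℝ fun j : Fin ℓ => (𝓕.h j).linear)
    (hgen : GenericFlag A 𝓕)
    (h1 : Cond1On A Set.univ 𝓕) (h2 : Cond2On A Set.univ 𝓕)
    (q : ℕ) (hq2 : q ≤ ℓ)
    (C X : Set (Fin ℓ → ℝ))
    (hC : ChF A 𝓕 q C) (hX : IsXC A 𝓕 q C X)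
    (pC : Fin ℓ → ℝ) (hpC : pC ∈ C ∩ 𝓕.F q) :
    (∀ z ∈ S A (tau X) pC, ∀ t ∈ Set.Icc (0 : ℝ) 1,
        (1 - t) • mkC pC 0 + t • z ∈ S A (tau X) pC) ∧
    ContractibleSpace (S A (tau X) pC) :=
  S_starShaped_contractible_general ℓ n A 𝓕 q C X hC pC hpC

end IY
end

section
/- For every C ∈ ch^q_F(A), the set S(C) is contained in M(A), and S(C) is an open subset of the real (2ℓ − q)-dimensional affine subspace E_C = {x + iv ∈ ℂ^ℓ : x ∈ ℝ^ℓ, v ∈ τ(X_C)} of ℂ^ℓ. -/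
open Set

/-!
A point `x + iv` of `S(C)` avoids every `H_ℂ`: if `α_H(x) = 0` then `H` meets `[p_C, x]` at `x`,
so `v ∉ τ(H)`. Openness in `E_C` holds because `S(C)` is cut out of `E_C` by finitely many
conditions "`H ∉ Sep(p_C, x)` or `v ∉ τ(H)`", and `{x : H ∈ Sep(p_C, x)}` is closed, being the
projection of a closed set along the compact parameter interval of the segment. The dimension
count is `E_C ≅ ℝ^ℓ × τ(X_C)`.
-/

theorem isClosed_setOf_segment_inter_nonempty {E : Type*} [AddCommGroup E] [Module ℝ E]
    [TopologicalSpace E] [IsTopologicalAddGroup E] [ContinuousSMul ℝ E]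
    (p : E) {K : Set E} (hK : IsClosed K) :
    IsClosed {x | (segment ℝ p x ∩ K).Nonempty} := by
  have hclosed : IsClosed {tx : Icc (0 : ℝ) 1 × E | AffineMap.lineMap p tx.2 (tx.1 : ℝ) ∈ K} :=
    hK.preimage (by simp only [AffineMap.lineMap_apply_module]; fun_prop)
  convert isClosedMap_snd_of_compactSpace _ hclosed using 1
  ext x
  simp [segment_eq_image_lineMap, Set.Nonempty]

namespace IY
open Arrangement

theorem continuous_reP {ℓ : ℕ} : Continuous (reP : (Fin ℓ → ℂ) → (Fin ℓ → ℝ)) :=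
  continuous_pi fun j => Complex.continuous_re.comp (continuous_apply j)

theorem continuous_imP {ℓ : ℕ} : Continuous (imP : (Fin ℓ → ℂ) → (Fin ℓ → ℝ)) :=
  continuous_pi fun j => Complex.continuous_im.comp (continuous_apply j)

theorem isClosed_setOf_sepPt {ℓ n : ℕ} (A : Arrangement ℓ n) (p : Fin ℓ → ℝ) (i : Fin n) :
    IsClosed {x | SepPt A p x i} :=
  isClosed_setOf_segment_inter_nonempty p
    (isClosed_singleton.preimage (A.α i).continuous_of_finiteDimensional)

theorem S_subset_M {ℓ n : ℕ} (A : Arrangement ℓ n) (T : Submodule ℝ (Fin ℓ → ℝ))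
    (p : Fin ℓ → ℝ) : S A T p ⊆ A.M :=
  fun z hz i hi => hz.2 i ⟨reP z, right_mem_segment ℝ p (reP z), hi.1⟩ hi.2

theorem isOpen_setOf_sepPt_imp {ℓ n : ℕ} (A : Arrangement ℓ n) (p : Fin ℓ → ℝ) :
    IsOpen {z : Fin ℓ → ℂ | ∀ i, SepPt A p (reP z) i → (A.α i).linear (imP z) ≠ 0} := by
  simp only [ofPred_forall, imp_iff_not_or, ofPred_or]
  refine isOpen_iInter_of_finite fun i => IsOpen.union ?_ ?_
  · exact ((isClosed_setOf_sepPt A p i).preimage continuous_reP).isOpen_compl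
  · exact isOpen_ne_fun ((A.α i).linear.continuous_of_finiteDimensional.comp continuous_imP)
      continuous_const

theorem isOpen_val_preimage_S {ℓ n : ℕ} (A : Arrangement ℓ n) (T : Submodule ℝ (Fin ℓ → ℝ))
    (p : Fin ℓ → ℝ) :
    IsOpen (Subtype.val ⁻¹' S A T p : Set {z : Fin ℓ → ℂ // imP z ∈ T}) := by
  convert (isOpen_setOf_sepPt_imp A p).preimage continuous_subtype_val using 1
  ext z
  simp [S, z.2]

noncomputable def imL (ℓ : ℕ) : (Fin ℓ → ℂ) →ₗ[ℝ] (Fin ℓ → ℝ) :=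
  Complex.imLm.compLeft (Fin ℓ)

noncomputable def imComap {ℓ : ℕ} (T : Submodule ℝ (Fin ℓ → ℝ)) : Submodule ℝ (Fin ℓ → ℂ) :=
  T.comap (imL ℓ)

noncomputable def imComapEquiv {ℓ : ℕ} (T : Submodule ℝ (Fin ℓ → ℝ)) :
    imComap T ≃ₗ[ℝ] (Fin ℓ → ℝ) × T where
  toFun z := (reP z.1, ⟨imP z.1, z.2⟩)
  map_add' _ _ := rfl
  map_smul' r z := by ext j <;> simp [reP, imP]
  invFun xv := ⟨mkC xv.1 xv.2.1, xv.2.2⟩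
  left_inv _ := rfl
  right_inv _ := rfl

theorem finrank_imComap {ℓ : ℕ} (T : Submodule ℝ (Fin ℓ → ℝ)) :
    Module.finrank ℝ (imComap T) = ℓ + Module.finrank ℝ T := by
  rw [(imComapEquiv T).finrank_eq, Module.finrank_prod, Module.finrank_fin_fun]

theorem exists_affineSubspace_eq_setOf_imP_mem {ℓ : ℕ} (T : Submodule ℝ (Fin ℓ → ℝ)) :
    ∃ W : AffineSubspace ℝ (Fin ℓ → ℂ), (W : Set (Fin ℓ → ℂ)) = {z | imP z ∈ T} ∧
      Module.finrank ℝ W.direction = ℓ + Module.finrank ℝ T :=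
  ⟨(imComap T).toAffineSubspace, rfl, by
    rw [Submodule.toAffineSubspace_direction, finrank_imComap]⟩

theorem S_subset_M_and_open_general (ℓ n : ℕ) (A : Arrangement ℓ n) (𝓕 : Flag ℓ)
    (q : ℕ) (hq2 : q ≤ ℓ)
    (C X : Set (Fin ℓ → ℝ))
    (hX : IsXC A 𝓕 q C X)
    (pC : Fin ℓ → ℝ) :
    S A (tau X) pC ⊆ A.M ∧
    S A (tau X) pC ⊆ {z : Fin ℓ → ℂ | imP z ∈ tau X} ∧
    (∃ W : AffineSubspace ℝ (Fin ℓ → ℂ),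
        (W : Set (Fin ℓ → ℂ)) = {z : Fin ℓ → ℂ | imP z ∈ tau X} ∧
        Module.finrank ℝ W.direction = 2 * ℓ - q) ∧
    IsOpen (Subtype.val ⁻¹' (S A (tau X) pC) :
      Set {z : Fin ℓ → ℂ // imP z ∈ tau X}) := by
  have hdim : Module.finrank ℝ (tau X) = ℓ - q := hX.2.1
  obtain ⟨W, hW, hWdim⟩ := exists_affineSubspace_eq_setOf_imP_mem (tau X)
  refine ⟨S_subset_M A _ pC, fun z hz => hz.1, ⟨W, hW, ?_⟩, isOpen_val_preimage_S A _ pC⟩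
  omega

/-- `S(C) ⊆ M(A)`, and `S(C)` is an open subset of the real
`(2ℓ - q)`-dimensional affine subspace `E_C = {x + iv : v ∈ τ(X_C)}` of `ℂ^ℓ`. -/
theorem S_subset_M_and_open (ℓ n : ℕ) (A : Arrangement ℓ n) (𝓕 : Flag ℓ)
    (hind : LinearIndependent ℝ fun j : Fin ℓ => (𝓕.h j).linear)
    (hgen : GenericFlag A 𝓕)
    (h1 : Cond1On A Set.univ 𝓕) (h2 : Cond2On A Set.univ 𝓕)
    (q : ℕ) (hq2 : q ≤ ℓ)
    (C X : Set (Fin ℓ → ℝ))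
    (hC : ChF A 𝓕 q C) (hX : IsXC A 𝓕 q C X)
    (pC : Fin ℓ → ℝ) (hpC : pC ∈ C ∩ 𝓕.F q) :
    S A (tau X) pC ⊆ A.M ∧
    S A (tau X) pC ⊆ {z : Fin ℓ → ℂ | imP z ∈ tau X} ∧
    (∃ W : AffineSubspace ℝ (Fin ℓ → ℂ),
        (W : Set (Fin ℓ → ℂ)) = {z : Fin ℓ → ℂ | imP z ∈ tau X} ∧
        Module.finrank ℝ W.direction = 2 * ℓ - q) ∧
    IsOpen (Subtype.val ⁻¹' (S A (tau X) pC) :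
      Set {z : Fin ℓ → ℂ // imP z ∈ tau X}) :=
  S_subset_M_and_open_general ℓ n A 𝓕 q hq2 C X hX pC

end IY
end
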